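/- arXiv:1707.01715 — 7 statements merged into one kernel-verified Lean document; each statement's English description precedes it below -/
import Mathlib

section
/- Let s, r, n, m be positive integers, let ℒ = {l₁, l₂, …, l_s} be a set of s nonnegative integers with l₁ < l₂ < … < l_s, and let K = {k₁, k₂, …, k_r} be a set of positive integers with kᵢ > s − r + l₁ for every 1 ≤ i ≤ r. Suppose A₁, A₂, …, A_m are pairwise distinct subsets of [n] such that |Aᵢ| ∈ K for every 1 ≤ i ≤ m and |Aᵢ ∩ Aⱼ| ∈ ℒ for every pair i ≠ j. Let k = max{|Aⱼ| : 1 ≤ j ≤ m}. If n ≥ C(k², l₁+1)·s + l₁, then m ≤ C(n−l₁, s) + C(n−l₁, s−1) + … + C(n−l₁, s−r+1), where terms C(n−l₁, i) with i < 0 are interpreted as 0. -/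
/-!
If the sets have at least `l₁` common points, fix `l₁` of them as a core `D`. The polynomial
method then applies to functions of `B ⊇ D`: the polynomials `∏_{l ∈ ℒ, l < |Aᵢ|} (|B ∩ Aᵢ| - l)`
together with `[I ⊆ B] ∏_{x ∈ K} (|B| - x)` for `I ∩ D = ∅`, `|I| ≤ s - r`, are linearly
independent (they are triangular with respect to evaluation at the `Aᵢ` and at the `I ∪ D`), and
they are multilinear of degree at most `s` in the variables `[y ∈ B]`, `y ∉ D`.

Otherwise, adding sets one at a time, each shrinking the common intersection by a point and adding
at most `k - l₁` new ones, gives a subfamily whose intersection has fewer than `l₁` points and whose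
union `U` has at most `k²` points. Every `Aᵢ` then meets `U` in more than `l₁` points, so choosing
an `(l₁ + 1)`-subset of `Aᵢ ∩ U` splits the family into at most `C(k², l₁ + 1)` subfamilies, each
with a common core of size `l₁ + 1` and intersections in `ℒ \ {l₁}`, to which the first case
applies. The hypothesis on `n` gives `C(k², l₁ + 1) · C(n - l₁ - 1, j) ≤ C(n - l₁, j + 1)` for
`j < s`.
-/

open Finset Function

theorem linearIndependent_of_eval_triangular {ι X β R : Type*} [Fintype ι] [LinearOrder β]
    [Ring R] [NoZeroDivisors R] (f : ι → X → R) (x : ι → X) (w : ι → β)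
    (hdiag : ∀ i, f i (x i) ≠ 0) (hlower : ∀ i j, i ≠ j → w i ≤ w j → f j (x i) = 0) :
    LinearIndependent R f := by
  classical
  rw [Fintype.linearIndependent_iff]
  by_contra! ⟨g, hg, i₀, hi₀⟩
  obtain ⟨i, hi, hmin⟩ := exists_min_image (univ.filter fun i => g i ≠ 0) w
    ⟨i₀, mem_filter.2 ⟨mem_univ _, hi₀⟩⟩
  have heval : ∑ j, g j * f j (x i) = 0 := by simpa using congrFun hg (x i)
  rw [sum_eq_single i] at heval
  · exact mul_ne_zero (mem_filter.1 hi).2 (hdiag i) heval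
  · intro j _ hji
    by_cases hj : g j = 0
    · rw [hj, zero_mul]
    · rw [hlower i j hji.symm (hmin j (mem_filter.2 ⟨mem_univ _, hj⟩)), mul_zero]
  · simp

theorem LinearIndependent.fintype_card_le_of_mem_span_range {K M ι κ : Type*} [DivisionRing K]
    [AddCommGroup M] [Module K M] [Fintype ι] [Fintype κ] {v : ι → M} {b : κ → M}
    (hv : LinearIndependent K v) (hvb : ∀ i, v i ∈ Submodule.span K (Set.range b)) :
    Fintype.card ι ≤ Fintype.card κ := by
  classical
  have := linearIndependent_le_span' v hv (Set.range b) (by rintro _ ⟨i, rfl⟩; exact hvb i)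
  rw [Cardinal.mk_fintype, Nat.cast_le] at this
  exact this.trans (Fintype.card_range_le b)

theorem Finset.card_powerset_filter_card_mem {α : Type*} (E : Finset α) (t : Finset ℕ) :
    #{T ∈ E.powerset | #T ∈ t} = ∑ j ∈ t, (#E).choose j := by
  rw [card_eq_sum_card_fiberwise (s := {T ∈ E.powerset | #T ∈ t}) (f := card) (t := t)
    fun T hT => (mem_filter.1 hT).2]
  refine sum_congr rfl fun j hj => ?_
  rw [← card_powersetCard, powersetCard_eq_filter, filter_filter]
  exact congrArg card (filter_congr fun T _ => ⟨And.right, fun h => ⟨h ▸ hj, h⟩⟩)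

namespace CommonCore

variable {α : Type*} [DecidableEq α]

def subsetIndicator (D T : Finset α) : {B // D ⊆ B} → ℚ := fun B => if T ⊆ B.1 then 1 else 0

lemma subsetIndicator_mul (D T T' : Finset α) :
    subsetIndicator D T * subsetIndicator D T' = subsetIndicator D (T ∪ T') := by
  funext B
  by_cases h : T ⊆ B.1 <;> by_cases h' : T' ⊆ B.1 <;>
    simp [subsetIndicator, union_subset_iff, h, h']

lemma subsetIndicator_empty (D : Finset α) : subsetIndicator D ∅ = 1 := by
  funext B; simp [subsetIndicator]

def intersectionPoly (D : Finset α) (L : Finset ℕ) (A : Finset α) : {B // D ⊆ B} → ℚ :=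
  fun B => ∏ t ∈ L with t < #A, ((#(B.1 ∩ A) : ℚ) - t)

def sizePoly (D : Finset α) (K : Finset ℕ) (I : Finset α) : {B // D ⊆ B} → ℚ :=
  fun B => subsetIndicator D I B * ∏ x ∈ K, ((#B.1 : ℚ) - x)

lemma intersectionPoly_self_ne_zero (L : Finset ℕ) {D A : Finset α} (hD : D ⊆ A) :
    intersectionPoly D L A ⟨A, hD⟩ ≠ 0 := by
  refine prod_ne_zero_iff.2 fun t ht => sub_ne_zero.2 ?_
  rw [inter_self]
  exact_mod_cast ((mem_filter.1 ht).2).ne'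

lemma intersectionPoly_eq_zero {L : Finset ℕ} {D A A' : Finset α} (hD : D ⊆ A) (hne : A' ≠ A)
    (hcard : #A ≤ #A') (hL : #(A ∩ A') ∈ L) : intersectionPoly D L A' ⟨A, hD⟩ = 0 := by
  have hlt : #(A ∩ A') < #A' := card_lt_card ⟨inter_subset_right,
    fun h => hne (eq_of_subset_of_card_le (fun a ha => (mem_inter.1 (h ha)).1) hcard)⟩
  exact prod_eq_zero (mem_filter.2 ⟨hL, hlt⟩) (sub_self _)

lemma sizePoly_eq_zero_of_card_mem {K : Finset ℕ} {D C : Finset α} (I : Finset α) (hC : D ⊆ C)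
    (hK : #C ∈ K) : sizePoly D K I ⟨C, hC⟩ = 0 :=
  mul_eq_zero_of_right _ (prod_eq_zero hK (sub_self _))

lemma sizePoly_eq_zero_of_not_subset {K : Finset ℕ} {D I : Finset α} {B : {B // D ⊆ B}}
    (hI : ¬ I ⊆ B.1) : sizePoly D K I B = 0 := by
  simp [sizePoly, subsetIndicator, hI]

lemma sizePoly_union_ne_zero {K : Finset ℕ} {D I : Finset α} (hI : Disjoint I D)
    (hK : #I + #D ∉ K) : sizePoly D K I ⟨I ∪ D, subset_union_right⟩ ≠ 0 := by
  simp only [sizePoly, subsetIndicator, if_pos subset_union_left, one_mul,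
    card_union_of_disjoint hI]
  refine prod_ne_zero_iff.2 fun x hx => sub_ne_zero.2 fun h => hK ?_
  rwa [Nat.cast_inj.1 h]

variable [Fintype α]

/-- The functions of `B ⊇ D` that are polynomials of degree at most `d` in the variables
`[y ∈ B]`, `y ∉ D`. -/
def lowDegree (D : Finset α) (d : ℕ) : Submodule ℚ ({B // D ⊆ B} → ℚ) :=
  Submodule.span ℚ (Set.range fun T : {T ∈ Dᶜ.powerset | #T ≤ d} => subsetIndicator D T)

lemma subsetIndicator_mem_lowDegree {D T : Finset α} {d : ℕ} (hT : T ⊆ Dᶜ) (hd : #T ≤ d) :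
    subsetIndicator D T ∈ lowDegree D d :=
  Submodule.subset_span ⟨⟨T, mem_filter.2 ⟨mem_powerset.2 hT, hd⟩⟩, rfl⟩

lemma forall_mem_range_subsetIndicator {D : Finset α} {d : ℕ} {p : ({B // D ⊆ B} → ℚ) → Prop}
    (h : ∀ T ⊆ Dᶜ, #T ≤ d → p (subsetIndicator D T)) :
    ∀ f ∈ Set.range fun T : {T ∈ Dᶜ.powerset | #T ≤ d} => subsetIndicator D T, p f := by
  rintro _ ⟨⟨T, hT⟩, rfl⟩
  rw [mem_filter, mem_powerset] at hT
  exact h T hT.1 hT.2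

lemma lowDegree_mono {D : Finset α} {d d' : ℕ} (h : d ≤ d') : lowDegree D d ≤ lowDegree D d' :=
  Submodule.span_le.2 <| forall_mem_range_subsetIndicator fun _ hT hd =>
    subsetIndicator_mem_lowDegree hT (hd.trans h)

lemma one_mem_lowDegree (D : Finset α) (d : ℕ) : 1 ∈ lowDegree D d := by
  rw [← subsetIndicator_empty]
  exact subsetIndicator_mem_lowDegree (empty_subset _) (Nat.zero_le _)

lemma mul_mem_lowDegree {D : Finset α} {a b : ℕ} {f g : {B // D ⊆ B} → ℚ}
    (hf : f ∈ lowDegree D a) (hg : g ∈ lowDegree D b) : f * g ∈ lowDegree D (a + b) := by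
  induction hf using Submodule.span_induction with
  | mem f hf =>
    induction hg using Submodule.span_induction with
    | mem g hg =>
      revert f g
      refine forall_mem_range_subsetIndicator fun T hT hTa =>
        forall_mem_range_subsetIndicator fun T' hT' hT'b => ?_
      rw [subsetIndicator_mul]
      exact subsetIndicator_mem_lowDegree (union_subset hT hT')
        ((card_union_le _ _).trans (add_le_add hTa hT'b))
    | zero => simp
    | add g g' _ _ hg hg' => rw [mul_add]; exact add_mem hg hg'
    | smul c g _ hg => rw [mul_smul_comm]; exact Submodule.smul_mem _ _ hg
  | zero => simp
  | add f f' _ _ hf hf' => rw [add_mul]; exact add_mem hf hf'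
  | smul c f _ hf => rw [smul_mul_assoc]; exact Submodule.smul_mem _ _ hf

lemma prod_mem_lowDegree {D : Finset α} {ι : Type*} (s : Finset ι)
    (f : ι → {B // D ⊆ B} → ℚ) (h : ∀ i ∈ s, f i ∈ lowDegree D 1) :
    ∏ i ∈ s, f i ∈ lowDegree D #s := by
  induction s using Finset.cons_induction with
  | empty => exact one_mem_lowDegree D _
  | cons i s hi ih =>
    rw [prod_cons, card_cons, add_comm]
    exact mul_mem_lowDegree (h i (mem_cons_self i s)) (ih fun j hj => h j (mem_cons_of_mem hj))

lemma card_inter_sub_mem_lowDegree (D E : Finset α) (c : ℚ) :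
    (fun B : {B // D ⊆ B} => (#(B.1 ∩ E) : ℚ) - c) ∈ lowDegree D 1 := by
  have h : (fun B : {B // D ⊆ B} => (#(B.1 ∩ E) : ℚ) - c)
      = ∑ y ∈ E \ D, subsetIndicator D {y} + (#(E ∩ D) - c) • 1 := by
    funext B
    simp only [Pi.add_apply, Pi.smul_apply, Finset.sum_apply, subsetIndicator,
      singleton_subset_iff, Pi.one_apply, smul_eq_mul, mul_one]
    rw [sum_boole, add_sub_assoc', ← Nat.cast_add, ← card_sdiff_add_card_inter (B.1 ∩ E) D,
      inter_right_comm, inter_eq_right.2 B.2, inter_comm D]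
    congr 4
    ext y
    simp only [mem_sdiff, mem_inter, mem_filter]
    tauto
  rw [h]
  refine add_mem (Submodule.sum_mem _ fun y hy => ?_)
    (Submodule.smul_mem _ _ (one_mem_lowDegree _ _))
  exact subsetIndicator_mem_lowDegree (by simpa using (mem_sdiff.1 hy).2) (by simp)

lemma intersectionPoly_mem_lowDegree (D : Finset α) (L : Finset ℕ) (A : Finset α) :
    intersectionPoly D L A ∈ lowDegree D #L := by
  have h : intersectionPoly D L A = ∏ t ∈ L with t < #A, fun B => (#(B.1 ∩ A) : ℚ) - t := by
    funext B
    simp only [intersectionPoly, Finset.prod_apply]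
  rw [h]
  exact lowDegree_mono (card_filter_le _ _)
    (prod_mem_lowDegree _ _ fun t _ => card_inter_sub_mem_lowDegree D A t)

lemma sizePoly_mem_lowDegree (K : Finset ℕ) {D I : Finset α} (hI : I ⊆ Dᶜ) :
    sizePoly D K I ∈ lowDegree D (#I + #K) := by
  have h : sizePoly D K I
      = subsetIndicator D I * ∏ x ∈ K, fun B => (#(B.1 ∩ univ) : ℚ) - x := by
    funext B
    simp only [sizePoly, Pi.mul_apply, Finset.prod_apply, inter_univ]
  rw [h]
  exact mul_mem_lowDegree (subsetIndicator_mem_lowDegree hI le_rfl)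
    (prod_mem_lowDegree _ _ fun x _ => card_inter_sub_mem_lowDegree D univ x)

end CommonCore

open CommonCore in
theorem card_le_sum_choose_of_common_core {α ι : Type*} [Fintype α] [DecidableEq α] [Fintype ι]
    (L K : Finset ℕ) (D : Finset α) (A : ι → Finset α) (hA : Injective A)
    (hAD : ∀ i, D ⊆ A i) (hAK : ∀ i, #(A i) ∈ K) (hAL : ∀ i j, i ≠ j → #(A i ∩ A j) ∈ L)
    (hK : ∀ x ∈ K, (#L : ℤ) - #K + #D < x) :
    Fintype.card ι ≤ ∑ j ∈ Icc (#L + 1 - #K) #L, (Fintype.card α - #D).choose j := by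
  set 𝕀 := {I ∈ Dᶜ.powerset | #I + #K ≤ #L}
  have h𝕀 : ∀ I : 𝕀, I.1 ⊆ Dᶜ ∧ #I.1 + #K ≤ #L := fun I =>
    (mem_filter.1 I.2).imp_left mem_powerset.1
  let f : ι ⊕ 𝕀 → {B // D ⊆ B} → ℚ :=
    Sum.elim (fun i => intersectionPoly D L (A i)) (fun I => sizePoly D K I)
  -- Intersection polynomials ordered by `#(A i)`, then size polynomials by `#I`: each one
  -- vanishes at the evaluation points of all those after it.
  have hindep : LinearIndependent ℚ f := by
    refine linearIndependent_of_eval_triangular f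
      (Sum.elim (fun i => ⟨A i, hAD i⟩) (fun I => ⟨I.1 ∪ D, subset_union_right⟩))
      (Sum.elim (fun i => toLex (Sum.inl #(A i))) (fun I => toLex (Sum.inr #I.1)) :
        _ → ℕ ⊕ₗ ℕ) ?_ ?_
    · rintro (i | I)
      · exact intersectionPoly_self_ne_zero L (hAD i)
      · refine sizePoly_union_ne_zero (subset_compl_iff_disjoint_right.1 (h𝕀 I).1) fun hIK => ?_
        have := hK _ hIK
        have := (h𝕀 I).2
        omega
    · rintro (i | I) (j | J) hne hw
      · exact intersectionPoly_eq_zero (hAD i) (hA.ne fun h => hne (congrArg _ h.symm))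
          (Sum.Lex.inl_le_inl_iff.1 hw) (hAL i j fun h => hne (congrArg _ h))
      · exact sizePoly_eq_zero_of_card_mem _ _ (hAK i)
      · exact absurd hw Sum.Lex.not_inr_le_inl
      · refine sizePoly_eq_zero_of_not_subset fun hJ => hne (congrArg _ (Subtype.ext ?_)).symm
        refine eq_of_subset_of_card_le (fun y hy => ?_) (Sum.Lex.inr_le_inr_iff.1 hw)
        exact (mem_union.1 (hJ hy)).resolve_right (mem_compl.1 ((h𝕀 J).1 hy))
  have hmem : ∀ z, f z ∈ lowDegree D #L := by
    rintro (i | I)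
    · exact intersectionPoly_mem_lowDegree D L (A i)
    · exact lowDegree_mono (h𝕀 I).2 (sizePoly_mem_lowDegree K (h𝕀 I).1)
  have hcard := hindep.fintype_card_le_of_mem_span_range hmem
  have hsplit : {T ∈ Dᶜ.powerset | #T ≤ #L}
      = 𝕀 ∪ {T ∈ Dᶜ.powerset | #T ∈ Icc (#L + 1 - #K) #L} := by
    rw [← filter_or]
    exact filter_congr fun T _ => by rw [mem_Icc]; omega
  have hdisj : Disjoint 𝕀 {T ∈ Dᶜ.powerset | #T ∈ Icc (#L + 1 - #K) #L} :=
    disjoint_filter.2 fun T _ h₁ h₂ => by rw [mem_Icc] at h₂; omega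
  rw [Fintype.card_sum, Fintype.card_coe, Fintype.card_coe, hsplit, card_union_of_disjoint hdisj,
    card_powerset_filter_card_mem, card_compl] at hcard
  omega

theorem mul_sum_Icc_choose_le {c a b N : ℕ} (h : c * (b + 1) ≤ N + 1) :
    c * ∑ j ∈ Icc a b, N.choose j ≤ ∑ j ∈ Icc (a + 1) (b + 1), (N + 1).choose j := by
  rw [mul_sum, ← map_add_right_Icc, sum_map]
  refine sum_le_sum fun j hj => Nat.le_of_mul_le_mul_right ?_ j.succ_pos
  calc c * N.choose j * (j + 1) = c * (j + 1) * N.choose j := by ring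
    _ ≤ (N + 1) * N.choose j :=
        Nat.mul_le_mul_right _ ((Nat.mul_le_mul_left c (by simp at hj; omega)).trans h)
    _ = (N + 1).choose (j + 1) * (j + 1) := Nat.add_one_mul_choose_eq N j

section NoCommonCore

variable {α ι : Type*} [Fintype α] [DecidableEq α] {A : ι → Finset α} {k l₀ : ℕ}

lemma subset_inf_of_card_le (hL : ∀ i j, i ≠ j → l₀ ≤ #(A i ∩ A j)) {S : Finset ι}
    {X : Finset α} {i : ι} (hXi : X ⊆ A i) (hX : #X ≤ l₀)
    (hSX : ∀ j ∈ S, j ≠ i → A i ∩ A j ⊆ X) : X ⊆ S.inf A := by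
  refine Finset.le_inf fun j hj => ?_
  obtain rfl | hji := eq_or_ne j i
  · exact hXi
  · rw [← eq_of_subset_of_card_le (hSX j hj hji) (hX.trans (hL i j hji.symm))]
    exact inter_subset_right

lemma lt_card_of_card_inf_lt [Fintype ι] [Nontrivial ι] (hL : ∀ i j, i ≠ j → l₀ ≤ #(A i ∩ A j))
    (hcore : #(univ.inf A) < l₀) (i : ι) : l₀ < #(A i) := by
  obtain ⟨j, hji⟩ := exists_ne i
  by_contra! h
  have h₁ := card_le_card (subset_inf_of_card_le (S := univ) hL subset_rfl h
    fun j _ _ => inter_subset_left)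
  have h₂ := card_le_card (inter_subset_left : A i ∩ A j ⊆ A i)
  have h₃ := hL i j hji.symm
  omega

lemma lt_card_inter_sup (hL : ∀ i j, i ≠ j → l₀ ≤ #(A i ∩ A j)) (hsize : ∀ i, l₀ < #(A i))
    {S : Finset ι} (hS : S.Nonempty) (hSinf : #(S.inf A) < l₀) (i : ι) :
    l₀ < #(A i ∩ S.sup A) := by
  obtain ⟨j, hj⟩ := hS
  by_contra! h
  have h₁ := card_le_card (subset_inf_of_card_le hL inter_subset_left h
    fun j' hj' _ => inter_subset_inter_left (le_sup hj'))
  obtain rfl | hji := eq_or_ne j i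
  · rw [inter_eq_left.2 (le_sup hj)] at h
    exact (hsize j).not_ge h
  · have h₂ := card_le_card (inter_subset_inter_left (le_sup hj) : A i ∩ A j ⊆ A i ∩ S.sup A)
    have h₃ := hL i j hji.symm
    omega

lemma card_le_sum_choose_of_common_core_succ {κ : Type*} [Fintype κ] (L K : Finset ℕ)
    (B : κ → Finset α) (hB : Injective B) (T : Finset α) (hT : #T = l₀ + 1) (hBT : ∀ i, T ⊆ B i)
    (hBK : ∀ i, #(B i) ∈ K) (hBL : ∀ i j, i ≠ j → #(B i ∩ B j) ∈ L) (hl₀ : l₀ ∈ L)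
    (hK : ∀ x ∈ K, (#L : ℤ) - #K + l₀ < x) :
    Fintype.card κ ≤ ∑ j ∈ Icc (#L - #K) (#L - 1), (Fintype.card α - (l₀ + 1)).choose j := by
  have hBL' (i j : κ) (hij : i ≠ j) : #(B i ∩ B j) ∈ L.erase l₀ := by
    have := card_le_card (subset_inter (hBT i) (hBT j))
    exact mem_erase.2 ⟨by omega, hBL i j hij⟩
  have hs : 0 < #L := card_pos.2 ⟨l₀, hl₀⟩
  have := card_le_sum_choose_of_common_core (L.erase l₀) K T B hB hBT hBK hBL' fun x hx => by
    have := hK x hx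
    rw [card_erase_of_mem hl₀, hT]
    omega
  rwa [card_erase_of_mem hl₀, hT, show #L - 1 + 1 - #K = #L - #K by omega] at this

lemma card_le_sum_choose_of_subsingleton [Fintype ι] [Subsingleton ι] {L K : Finset ℕ}
    (hAK : ∀ i, #(A i) ∈ K) (hK : ∀ x ∈ K, (#L : ℤ) - #K + l₀ < x)
    (hcore : #(univ.inf A) < l₀) (M : ℕ) :
    Fintype.card ι ≤ ∑ j ∈ Icc (#L + 1 - #K) #L, M.choose j := by
  cases isEmpty_or_nonempty ι with
  | inl => simp
  | inr hι =>
    obtain ⟨i⟩ := hι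
    have h₁ := card_le_card (Finset.le_inf fun j _ => by rw [Subsingleton.elim j i] :
      A i ⊆ univ.inf A)
    have h₂ := hK _ (hAK i)
    rw [show #L + 1 - #K = 0 by omega]
    calc Fintype.card ι ≤ M.choose 0 := by simpa using Fintype.card_le_one_iff_subsingleton.2 ‹_›
      _ ≤ _ := single_le_sum (fun _ _ => Nat.zero_le _) (left_mem_Icc.2 (Nat.zero_le _))

variable [Fintype ι] [DecidableEq ι]

lemma exists_card_inf_insert_lt (hk : ∀ i, #(A i) ≤ k) (hL : ∀ i j, i ≠ j → l₀ ≤ #(A i ∩ A j))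
    (hcore : #(univ.inf A) < l₀) {S : Finset ι} {i₀ : ι} (hi₀ : i₀ ∈ S) (hS : l₀ ≤ #(S.inf A)) :
    ∃ j, #((insert j S).inf A) < #(S.inf A) ∧ #((insert j S).sup A) ≤ #(S.sup A) + (k - l₀) := by
  obtain ⟨j, hj⟩ : ∃ j, ¬ S.inf A ⊆ A j := by
    by_contra! h
    have := card_le_card (Finset.le_inf fun j _ => h j : S.inf A ⊆ univ.inf A)
    omega
  have hji₀ : j ≠ i₀ := by
    rintro rfl
    exact hj (inf_le hi₀)
  refine ⟨j, card_lt_card ?_, ?_⟩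
  · rw [inf_insert]
    exact ⟨inter_subset_right, fun h => hj fun a ha => (mem_inter.1 (h ha)).1⟩
  · have h₁ := card_le_card (sdiff_subset_sdiff subset_rfl (le_sup hi₀) :
      A j \ S.sup A ⊆ A j \ A i₀)
    have h₂ := card_sdiff_add_card_inter (A j) (A i₀)
    have h₃ := card_sdiff_add_card (A j) (S.sup A)
    have h₄ := hL j i₀ hji₀
    have h₅ := hk j
    rw [sup_insert]
    change #(A j ∪ S.sup A) ≤ _
    omega

/-- Each step of `exists_card_inf_insert_lt` shrinks the intersection by at least one point and
grows the union by at most `k - l₀`, so it does not increase `#(⋃ S) + (k - l₀) * #(⋂ S)`. -/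
lemma exists_card_inf_lt_of_potential_le (hk : ∀ i, #(A i) ≤ k)
    (hL : ∀ i j, i ≠ j → l₀ ≤ #(A i ∩ A j)) (hcore : #(univ.inf A) < l₀) (S : Finset ι)
    (hS : S.Nonempty) : ∃ S' : Finset ι, S'.Nonempty ∧ #(S'.inf A) < l₀ ∧
      #(S'.sup A) + (k - l₀) * #(S'.inf A) ≤ #(S.sup A) + (k - l₀) * #(S.inf A) := by
  induction hc : #(S.inf A) using Nat.strong_induction_on generalizing S with
  | _ c ih =>
    by_cases hlt : c < l₀
    · exact ⟨S, hS, hc ▸ hlt, hc ▸ le_rfl⟩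
    obtain ⟨i₀, hi₀⟩ := hS
    obtain ⟨j, hinf, hsup⟩ :=
      exists_card_inf_insert_lt hk hL hcore hi₀ (hc ▸ not_lt.1 hlt)
    obtain ⟨S', hS', hS'inf, hS'Φ⟩ :=
      ih _ (hc ▸ hinf) (insert j S) (insert_nonempty _ _) rfl
    refine ⟨S', hS', hS'inf, hS'Φ.trans ?_⟩
    have := Nat.mul_le_mul_left (k - l₀) (hc ▸ hinf : #((insert j S).inf A) + 1 ≤ c)
    rw [mul_add_one] at this
    omega

lemma exists_card_inf_lt_card_sup_le [Nonempty ι] (hk : ∀ i, #(A i) ≤ k)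
    (hL : ∀ i j, i ≠ j → l₀ ≤ #(A i ∩ A j)) (hcore : #(univ.inf A) < l₀) :
    ∃ S : Finset ι, S.Nonempty ∧ #(S.inf A) < l₀ ∧ #(S.sup A) ≤ k ^ 2 := by
  obtain ⟨i₀⟩ := ‹Nonempty ι›
  obtain ⟨S, hS, hinf, hΦ⟩ :=
    exists_card_inf_lt_of_potential_le hk hL hcore {i₀} (singleton_nonempty _)
  refine ⟨S, hS, hinf, ?_⟩
  rw [sup_singleton, inf_singleton] at hΦ
  have h₀ := hk i₀
  have h₁ := Nat.mul_le_mul_left (k - l₀) h₀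
  have h₂ : (k - l₀) * k ≤ (k - 1) * k := Nat.mul_le_mul_right _ (by omega)
  have h₃ : k + (k - 1) * k = k ^ 2 := by
    cases k <;> simp [sq, add_one_mul, add_comm]
  omega

lemma exists_card_le_sq_lt_card_inter [Nontrivial ι] (hk : ∀ i, #(A i) ≤ k)
    (hL : ∀ i j, i ≠ j → l₀ ≤ #(A i ∩ A j)) (hcore : #(univ.inf A) < l₀) :
    ∃ U : Finset α, #U ≤ k ^ 2 ∧ ∀ i, l₀ < #(A i ∩ U) := by
  obtain ⟨S, hS, hSinf, hSsup⟩ := exists_card_inf_lt_card_sup_le hk hL hcore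
  exact ⟨S.sup A, hSsup, lt_card_inter_sup hL (lt_card_of_card_inf_lt hL hcore) hS hSinf⟩

theorem card_le_sum_choose_of_card_inf_lt (L K : Finset ℕ) (hA : Injective A)
    (hAK : ∀ i, #(A i) ∈ K) (hAL : ∀ i j, i ≠ j → #(A i ∩ A j) ∈ L) (hl₀ : l₀ ∈ L)
    (hL : ∀ x ∈ L, l₀ ≤ x) (hk : ∀ i, #(A i) ≤ k) (hK : ∀ x ∈ K, (#L : ℤ) - #K + l₀ < x)
    (hcore : #(univ.inf A) < l₀) (hbig : (k ^ 2).choose (l₀ + 1) * #L + l₀ ≤ Fintype.card α) :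
    Fintype.card ι ≤ ∑ j ∈ Icc (#L + 1 - #K) #L, (Fintype.card α - l₀).choose j := by
  obtain hι | hι := subsingleton_or_nontrivial ι
  · exact card_le_sum_choose_of_subsingleton hAK hK hcore _
  obtain ⟨U, hUk, hU⟩ := exists_card_le_sq_lt_card_inter hk (fun i j h => hL _ (hAL i j h)) hcore
  choose φ hφA hφcard using fun i => exists_subset_card_eq (hU i)
  set N := Fintype.card α - (l₀ + 1) with hN
  set c := (k ^ 2).choose (l₀ + 1)
  have hs : 0 < #L := card_pos.2 ⟨l₀, hl₀⟩
  have hc : 0 < c := by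
    obtain ⟨i⟩ := hι.to_nonempty
    exact Nat.choose_pos ((hU i).trans_le ((card_le_card inter_subset_right).trans hUk))
  have hcs := Nat.mul_pos hc hs
  have hfiber : ∀ T ∈ U.powersetCard (l₀ + 1),
      #{i ∈ univ | φ i = T} ≤ ∑ j ∈ Icc (#L - #K) (#L - 1), N.choose j := by
    intro T hT
    rw [mem_powersetCard] at hT
    rw [← Fintype.card_subtype]
    refine card_le_sum_choose_of_common_core_succ L K (fun i : {i // φ i = T} => A i)
      (hA.comp Subtype.val_injective) T hT.2 (fun i => ?_) (fun i => hAK i)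
      (fun i j hij => hAL i j (Subtype.val_injective.ne hij)) hl₀ hK
    obtain ⟨i, rfl⟩ := i
    exact (hφA i).trans inter_subset_left
  calc Fintype.card ι = #(univ : Finset ι) := rfl
    _ ≤ (∑ j ∈ Icc (#L - #K) (#L - 1), N.choose j) * #(U.powersetCard (l₀ + 1)) :=
        card_le_mul_card_image_of_maps_to (fun i _ => mem_powersetCard.2
          ⟨(hφA i).trans inter_subset_right, hφcard i⟩) _ hfiber
    _ ≤ c * ∑ j ∈ Icc (#L - #K) (#L - 1), N.choose j := by
        rw [card_powersetCard, mul_comm]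
        exact Nat.mul_le_mul_right _ (Nat.choose_le_choose _ hUk)
    _ ≤ ∑ j ∈ Icc (#L - #K + 1) (#L - 1 + 1), (N + 1).choose j :=
        mul_sum_Icc_choose_le (by rw [Nat.sub_add_cancel hs]; omega)
    _ ≤ ∑ j ∈ Icc (#L + 1 - #K) #L, (Fintype.card α - l₀).choose j := by
        rw [Nat.sub_add_cancel hs, show N + 1 = Fintype.card α - l₀ by omega]
        exact sum_le_sum_of_subset (Icc_subset_Icc (by omega) le_rfl)

end NoCommonCore

theorem stmt_0_general (s r n m : ℕ) (hs : 0 < s)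
    (l : Fin s → ℕ) (hl : StrictMono l)
    (K : Finset ℕ) (hKcard : K.card = r)
    (hKgt : ∀ x ∈ K, (x : ℤ) > (s : ℤ) - (r : ℤ) + (l ⟨0, hs⟩ : ℤ))
    (A : Fin m → Finset (Fin n)) (hA : Function.Injective A)
    (hAK : ∀ i, (A i).card ∈ K)
    (hAL : ∀ i j, i ≠ j → ∃ t, (A i ∩ A j).card = l t)
    (k : ℕ) (hk₁ : ∀ j, (A j).card ≤ k)
    (hbig : n ≥ (k ^ 2).choose (l ⟨0, hs⟩ + 1) * s + l ⟨0, hs⟩) :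
    m ≤ ∑ j ∈ Finset.Icc (s + 1 - r) s, (n - l ⟨0, hs⟩).choose j := by
  set l₀ := l ⟨0, hs⟩
  set L := univ.image l
  have hLcard : #L = s := by
    rw [card_image_of_injective _ hl.injective, card_univ, Fintype.card_fin]
  have hl₀ : l₀ ∈ L := mem_image_of_mem l (mem_univ _)
  have hL : ∀ x ∈ L, l₀ ≤ x := by
    simp only [L, mem_image, mem_univ, true_and, forall_exists_index, forall_apply_eq_imp_iff]
    exact fun t => hl.monotone (Fin.le_iff_val_le_val.2 (Nat.zero_le _))
  have hAL' (i j : Fin m) (hij : i ≠ j) : #(A i ∩ A j) ∈ L := by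
    obtain ⟨t, ht⟩ := hAL i j hij
    exact ht ▸ mem_image_of_mem l (mem_univ t)
  have hK : ∀ x ∈ K, (#L : ℤ) - #K + l₀ < x := by
    rw [hLcard, hKcard]
    exact hKgt
  by_cases hcore : l₀ ≤ #(univ.inf A)
  · obtain ⟨D, hD, hDcard⟩ := exists_subset_card_eq hcore
    simpa [hLcard, hKcard, hDcard] using card_le_sum_choose_of_common_core L K D A hA
      (fun i => hD.trans (inf_le (mem_univ i))) hAK hAL' (by rwa [hDcard])
  · simpa [hLcard, hKcard] using card_le_sum_choose_of_card_inf_lt L K hA hAK hAL' hl₀ hL hk₁ hK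
      (not_le.1 hcore) (by simpa [hLcard] using hbig)

/-- **Theorem 1.7.** Let `ℒ = {l 0 < l 1 < ⋯ < l (s-1)}` be a set of `s` nonnegative
integers and `K` a set of `r` positive integers each greater than `s - r + l₁`.
If `A 1, …, A m` are pairwise distinct subsets of `[n]` with sizes in `K`,
pairwise intersections with cardinality in `ℒ`, maximum size `k`, and
`n ≥ C(k², l₁+1)·s + l₁`, then
`m ≤ C(n-l₁, s) + C(n-l₁, s-1) + ⋯ + C(n-l₁, s-r+1)`
(terms with negative lower index being `0`). -/
theorem stmt_0 (s r n m : ℕ) (hs : 0 < s) (hr : 0 < r) (hn : 0 < n) (hm : 0 < m)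
    (l : Fin s → ℕ) (hl : StrictMono l)
    (K : Finset ℕ) (hKcard : K.card = r) (hKpos : ∀ x ∈ K, 0 < x)
    (hKgt : ∀ x ∈ K, (x : ℤ) > (s : ℤ) - (r : ℤ) + (l ⟨0, hs⟩ : ℤ))
    (A : Fin m → Finset (Fin n)) (hA : Function.Injective A)
    (hAK : ∀ i, (A i).card ∈ K)
    (hAL : ∀ i j, i ≠ j → ∃ t, (A i ∩ A j).card = l t)
    (k : ℕ) (hk₁ : ∀ j, (A j).card ≤ k) (hk₂ : ∃ j, (A j).card = k)
    (hbig : n ≥ (k ^ 2).choose (l ⟨0, hs⟩ + 1) * s + l ⟨0, hs⟩) :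
    m ≤ ∑ j ∈ Finset.Icc (s + 1 - r) s, (n - l ⟨0, hs⟩).choose j :=
  stmt_0_general s r n m hs l hl K hKcard hKgt A hA hAK hAL k hk₁ hbig
end

section
/- Let s, n, m be positive integers and let ℒ = {l₁, l₂, …, l_s} be a set of s nonnegative integers with l₁ < l₂ < … < l_s. Suppose A₁, A₂, …, A_m are pairwise distinct subsets of [n] such that |Aᵢ ∩ Aⱼ| ∈ ℒ for every pair i ≠ j, and let k = max{|Aⱼ| : 1 ≤ j ≤ m}. If n ≥ C(k², l₁+1)·s + l₁, then m ≤ C(n−l₁, s) + C(n−l₁, s−1) + … + C(n−l₁, 0). -/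
/-!
If the common part `𝒜.inf id` of the family has at least `l₁` points, removing `l₁` of them from
every member leaves a family on `n - l₁` points with at most `s` intersection sizes, and the
nonuniform Frankl–Wilson bound applies. That bound is the polynomial method: the functions
`B ↦ ∏_{t ∈ ℒ, t < |A|} (|A ∩ B| - t)`, `A ∈ 𝒜`, are linearly independent (evaluate at the members,
ordered by size) and lie in the span of the indicators of `{B | S ⊆ B}` with `|S| ≤ s`.

Otherwise some set `W` of at most `k²` points meets every member in more than `l₁` points: take a
member `A₀` and, for each `x ∈ A₀` outside the common part, a member missing `x`, and let `W` be
their union. Every member then contains one of the `C(k², l₁ + 1)` subsets `S ⊆ W` of size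
`l₁ + 1`; the members containing a fixed `S` only have the `s - 1` intersection sizes `ℒ \ {l₁}`,
so Frankl–Wilson on the `n - l₁ - 1` points outside `S` bounds each class. Finally
`n - l₁ ≥ C(k², l₁ + 1) · s` gives `C(k², l₁ + 1) · ∑_{j<s} C(n-l₁-1, j) ≤ ∑_{j≤s} C(n-l₁, j)`.
-/

open Finset

theorem linearIndependent_of_apply_triangular {ι β K : Type*} [Ring K] [NoZeroDivisors K]
    {f : ι → β → K} (p : ι → β) (w : ι → ℕ) (hdiag : ∀ i, f i (p i) ≠ 0)
    (hoff : ∀ i j, i ≠ j → w i ≤ w j → f j (p i) = 0) :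
    LinearIndependent K f := by
  rw [linearIndependent_iff']
  intro s g hg i hi
  induction h : w i using Nat.strong_induction_on generalizing i with
  | _ n ih =>
  have hsum := congr_fun hg (p i)
  rw [Finset.sum_apply, Finset.sum_eq_single_of_mem i hi] at hsum
  · simpa [hdiag i] using hsum
  · intro j hj hji
    rcases lt_or_ge (w j) (w i) with hlt | hle
    · simp [ih _ (h ▸ hlt) j hj rfl]
    · simp [hoff i j (Ne.symm hji) hle]

theorem Nat.mul_choose_sub_one_le {c j N : ℕ} (h : c * (j + 1) ≤ N) :
    c * (N - 1).choose j ≤ N.choose (j + 1) := by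
  rcases N with _ | N
  · simp [show c = 0 by simpa using h]
  · refine Nat.le_of_mul_le_mul_right ?_ j.succ_pos
    calc c * N.choose j * (j + 1) = c * (j + 1) * N.choose j := by ring
      _ ≤ (N + 1) * N.choose j := Nat.mul_le_mul_right _ h
      _ = (N + 1).choose (j + 1) * (j + 1) := N.add_one_mul_choose_eq j

theorem Nat.mul_sum_range_choose_sub_one_le {c s N : ℕ} (h : c * s ≤ N) :
    c * ∑ j ∈ range s, (N - 1).choose j ≤ ∑ j ∈ range (s + 1), N.choose j := by
  rw [mul_sum, sum_range_succ']
  calc ∑ j ∈ range s, c * (N - 1).choose j ≤ ∑ j ∈ range s, N.choose (j + 1) :=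
        sum_le_sum fun j hj =>
          mul_choose_sub_one_le ((Nat.mul_le_mul_left c (mem_range.1 hj)).trans h)
    _ ≤ _ := Nat.le_add_right _ _

namespace Finset

lemma card_powerset_filter_card_le {α : Type*} (X : Finset α) (d : ℕ) :
    #(X.powerset.filter (#· ≤ d)) = ∑ j ∈ range (d + 1), (#X).choose j := by
  rw [card_eq_sum_card_fiberwise (f := card) (t := range (d + 1))
    (fun S hS => mem_range_succ_iff.2 (mem_filter.1 hS).2)]
  refine sum_congr rfl fun j hj => ?_
  rw [filter_filter, ← card_powersetCard, powersetCard_eq_filter]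
  congr 1
  ext S
  simp only [mem_filter, mem_powerset, mem_range] at hj ⊢
  grind

variable {α : Type*} [DecidableEq α]

def supersetIndicator (S : Finset α) : Finset α → ℝ := fun B => if S ⊆ B then 1 else 0

lemma supersetIndicator_union (S T : Finset α) :
    supersetIndicator (S ∪ T) = supersetIndicator S * supersetIndicator T := by
  ext B
  by_cases hS : S ⊆ B <;> by_cases hT : T ⊆ B <;>
    simp [supersetIndicator, hS, hT, union_subset_iff]

lemma supersetIndicator_empty : supersetIndicator (∅ : Finset α) = 1 := by
  ext B
  simp [supersetIndicator]

-- The functions `B ↦ p(𝟙_B)` for multilinear polynomials `p` of degree `≤ d` in the variables `X`.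
def lowDegreeSpan (X : Finset α) (d : ℕ) : Submodule ℝ (Finset α → ℝ) :=
  Submodule.span ℝ (supersetIndicator '' ↑(X.powerset.filter (#· ≤ d)))

instance (X : Finset α) (d : ℕ) : Module.Finite ℝ (lowDegreeSpan X d) :=
  Module.Finite.span_of_finite ℝ ((finite_toSet _).image _)

variable {X : Finset α}

lemma supersetIndicator_mem_lowDegreeSpan {S : Finset α} {d : ℕ} (hSX : S ⊆ X) (hS : #S ≤ d) :
    supersetIndicator S ∈ lowDegreeSpan X d :=
  Submodule.subset_span ⟨S, by simpa using ⟨hSX, hS⟩, rfl⟩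

lemma lowDegreeSpan_mono {d e : ℕ} (h : d ≤ e) : lowDegreeSpan X d ≤ lowDegreeSpan X e :=
  Submodule.span_mono <| by gcongr

lemma mul_mem_lowDegreeSpan {d e : ℕ} {f g : Finset α → ℝ}
    (hf : f ∈ lowDegreeSpan X d) (hg : g ∈ lowDegreeSpan X e) :
    f * g ∈ lowDegreeSpan X (d + e) := by
  have := Submodule.mul_mem_mul hf hg
  rw [lowDegreeSpan, lowDegreeSpan, Submodule.span_mul_span] at this
  refine Submodule.span_le.2 ?_ this
  rintro _ ⟨_, ⟨S, hS, rfl⟩, _, ⟨T, hT, rfl⟩, rfl⟩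
  simp only [coe_filter, mem_powerset, Set.mem_ofPred_eq] at hS hT
  show supersetIndicator S * supersetIndicator T ∈ _
  rw [← supersetIndicator_union]
  exact supersetIndicator_mem_lowDegreeSpan (union_subset hS.1 hT.1)
    ((card_union_le S T).trans (add_le_add hS.2 hT.2))

lemma card_inter_sub_mem_lowDegreeSpan {C : Finset α} (hC : C ⊆ X) (x : ℝ) :
    (fun B => (#(C ∩ B) : ℝ) - x) ∈ lowDegreeSpan X 1 := by
  have : (fun B => (#(C ∩ B) : ℝ) - x) =
      ∑ a ∈ C, supersetIndicator {a} - x • supersetIndicator ∅ := by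
    ext B
    simp [supersetIndicator]
  rw [this]
  exact sub_mem (sum_mem fun a ha => supersetIndicator_mem_lowDegreeSpan
    (singleton_subset_iff.2 (hC ha)) (card_singleton a).le)
    (Submodule.smul_mem _ _ (supersetIndicator_mem_lowDegreeSpan (empty_subset _) (Nat.zero_le _)))

lemma prod_card_inter_sub_mem_lowDegreeSpan {C : Finset α} (hC : C ⊆ X) (T : Finset ℕ) :
    ∏ t ∈ T, (fun B => (#(C ∩ B) : ℝ) - t) ∈ lowDegreeSpan X #T := by
  induction T using Finset.induction_on with
  | empty =>
    rw [prod_empty, ← supersetIndicator_empty]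
    exact supersetIndicator_mem_lowDegreeSpan (empty_subset _) le_rfl
  | insert t T ht ih =>
    rw [prod_insert ht, card_insert_of_notMem ht, add_comm]
    exact mul_mem_lowDegreeSpan (card_inter_sub_mem_lowDegreeSpan hC t) ih

lemma finrank_lowDegreeSpan_le (X : Finset α) (d : ℕ) :
    Module.finrank ℝ (lowDegreeSpan X d) ≤ ∑ j ∈ range (d + 1), (#X).choose j := by
  classical
  rw [lowDegreeSpan, ← coe_image]
  exact (finrank_span_finset_le_card _).trans
    (card_image_le.trans (card_powerset_filter_card_le X d).le)

theorem card_le_sum_choose_of_card_inter_mem {𝒜 : Finset (Finset α)} {L : Finset ℕ} {s : ℕ}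
    (h𝒜 : ∀ A ∈ 𝒜, A ⊆ X) (hL : ∀ A ∈ 𝒜, ∀ B ∈ 𝒜, A ≠ B → #(A ∩ B) ∈ L) (hs : #L ≤ s) :
    #𝒜 ≤ ∑ j ∈ range (s + 1), (#X).choose j := by
  let f : 𝒜 → Finset α → ℝ := fun A => ∏ t ∈ L.filter (· < #A.1), fun B => (#(A.1 ∩ B) : ℝ) - t
  have hf : ∀ A, f A ∈ lowDegreeSpan X s := fun A =>
    lowDegreeSpan_mono ((card_filter_le _ _).trans hs)
      (prod_card_inter_sub_mem_lowDegreeSpan (h𝒜 A A.2) _)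
  have hind : LinearIndependent ℝ f := by
    refine linearIndependent_of_apply_triangular (fun A => A.1) (fun A => #A.1) (fun A => ?_)
      fun A B hAB hle => ?_
    · simp only [f, prod_apply, inter_self]
      exact prod_ne_zero_iff.2 fun t ht =>
        sub_ne_zero.2 (by exact_mod_cast (mem_filter.1 ht).2.ne')
    · have hAB' : A.1 ≠ B.1 := Subtype.coe_ne_coe.2 hAB
      have hlt : #(B.1 ∩ A.1) < #B.1 := by
        refine card_lt_card ⟨inter_subset_left, fun hB => hAB' ?_⟩
        exact (eq_of_subset_of_card_le (hB.trans inter_subset_right) hle).symm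
      simp only [f, prod_apply]
      exact prod_eq_zero (mem_filter.2 ⟨hL B B.2 A A.2 hAB'.symm, hlt⟩) (sub_self _)
  have hindSpan : LinearIndependent ℝ fun A => (⟨f A, hf A⟩ : lowDegreeSpan X s) :=
    .of_comp (lowDegreeSpan X s).subtype hind
  calc #𝒜 = Fintype.card 𝒜 := (Fintype.card_coe 𝒜).symm
    _ ≤ Module.finrank ℝ (lowDegreeSpan X s) := hindSpan.fintype_card_le_finrank
    _ ≤ _ := finrank_lowDegreeSpan_le X s

theorem card_le_sum_choose_of_subset_of_card_inter_mem [Fintype α] {𝒜 : Finset (Finset α)}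
    {K : Finset α} {L : Finset ℕ} {s : ℕ} (hK : ∀ A ∈ 𝒜, K ⊆ A)
    (hL : ∀ A ∈ 𝒜, ∀ B ∈ 𝒜, A ≠ B → #(A ∩ B) ∈ L) (hs : #L ≤ s) :
    #𝒜 ≤ ∑ j ∈ range (s + 1), (Fintype.card α - #K).choose j := by
  have hinj : Set.InjOn (· \ K) 𝒜 := fun A hA B hB hAB => by
    rw [← sdiff_union_of_subset (hK A hA), ← sdiff_union_of_subset (hK B hB)]
    exact congrArg (· ∪ K) hAB
  rw [← card_image_of_injOn hinj, ← card_compl]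
  refine card_le_sum_choose_of_card_inter_mem (L := L.image (· - #K)) ?_ ?_ (card_image_le.trans hs)
  · simp only [mem_image]
    rintro _ ⟨A, -, rfl⟩
    exact fun x hx => mem_compl.2 (mem_sdiff.1 hx).2
  · simp only [mem_image]
    rintro _ ⟨A, hA, rfl⟩ _ ⟨B, hB, rfl⟩ hAB
    refine ⟨#(A ∩ B), hL A hA B hB (fun h => hAB (h ▸ rfl)), ?_⟩
    have hsdiff : A \ K ∩ (B \ K) = (A ∩ B) \ K := by
      ext x
      simp only [mem_inter, mem_sdiff]
      tauto
    rw [hsdiff, card_sdiff_of_subset (subset_inter (hK A hA) (hK B hB))]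

theorem exists_subfamily_inf_eq [Fintype α] {𝒜 : Finset (Finset α)} {A₀ : Finset α}
    (hA₀ : A₀ ∈ 𝒜) :
    ∃ T ⊆ 𝒜, A₀ ∈ T ∧ T.inf id = 𝒜.inf id ∧ #(T.erase A₀) ≤ #(A₀ \ 𝒜.inf id) := by
  have hsep : ∀ x ∈ A₀ \ 𝒜.inf id, ∃ B ∈ 𝒜, x ∉ B := fun x hx => by
    simpa [mem_inf] using (mem_sdiff.1 hx).2
  choose! B hB𝒜 hxB using hsep
  refine ⟨insert A₀ ((A₀ \ 𝒜.inf id).image B), insert_subset hA₀ (image_subset_iff.2 hB𝒜),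
    mem_insert_self _ _, le_antisymm (fun x hx => ?_) (inf_mono (insert_subset hA₀
      (image_subset_iff.2 hB𝒜))), (card_le_card (erase_insert_subset _ _)).trans card_image_le⟩
  rw [mem_inf] at hx
  by_contra hxI
  have hxA₀ : x ∈ A₀ := hx A₀ (mem_insert_self _ _)
  exact hxB x (mem_sdiff.2 ⟨hxA₀, hxI⟩)
    (hx (B x) (mem_insert_of_mem (mem_image_of_mem _ (mem_sdiff.2 ⟨hxA₀, hxI⟩))))

theorem card_sup_id_le {T : Finset (Finset α)} {A₀ : Finset α} {k l : ℕ}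
    (hk : ∀ B ∈ T, #B ≤ k) (hl : ∀ B ∈ T, B ≠ A₀ → l ≤ #(A₀ ∩ B)) :
    #(T.sup id) ≤ #A₀ + #(T.erase A₀) * (k - l) := by
  have hsub : T.sup id ⊆ A₀ ∪ (T.erase A₀).biUnion (· \ A₀) := by
    intro x hx
    obtain ⟨B, hB, hxB⟩ := mem_sup.1 hx
    by_cases hxA₀ : x ∈ A₀
    · exact mem_union_left _ hxA₀
    · exact mem_union_right _ (mem_biUnion.2
        ⟨B, mem_erase.2 ⟨fun h => hxA₀ (h ▸ hxB), hB⟩, mem_sdiff.2 ⟨hxB, hxA₀⟩⟩)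
  calc #(T.sup id) ≤ #A₀ + ∑ B ∈ T.erase A₀, #(B \ A₀) :=
        (card_le_card hsub).trans
          ((card_union_le _ _).trans (Nat.add_le_add_left card_biUnion_le _))
    _ ≤ #A₀ + #(T.erase A₀) * (k - l) := by
        rw [← smul_eq_mul]
        refine Nat.add_le_add_left (sum_le_card_nsmul _ _ _ fun B hB => ?_) _
        obtain ⟨hBA₀, hB⟩ := mem_erase.1 hB
        rw [card_sdiff]
        have := hk B hB
        have := hl B hB hBA₀
        omega

theorem lt_card_inter_sup_id [Fintype α] {𝒜 T : Finset (Finset α)} {l : ℕ} (hT𝒜 : T ⊆ 𝒜)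
    (hT : 1 < #T) (hTinf : T.inf id = 𝒜.inf id) (hinf : #(𝒜.inf id) < l)
    (hl : ∀ A ∈ 𝒜, ∀ B ∈ 𝒜, A ≠ B → l ≤ #(A ∩ B)) {A : Finset α} (hA : A ∈ 𝒜) :
    l < #(A ∩ T.sup id) := by
  by_contra! hle
  have hmeet : ∀ C ∈ T, C ≠ A → A ∩ C = A ∩ T.sup id := fun C hC hCA =>
    eq_of_subset_of_card_le (inter_subset_inter_left (le_sup (f := id) hC))
      (hle.trans (hl A hA C (hT𝒜 hC) hCA.symm))
  have hsub : A ∩ T.sup id ⊆ 𝒜.inf id := hTinf ▸ Finset.le_inf fun C hC => by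
    by_cases hCA : C = A
    · subst hCA
      exact inter_subset_left
    · rw [id, ← hmeet C hC hCA]
      exact inter_subset_right
  obtain ⟨C, hC, hCA⟩ := exists_mem_ne hT A
  have := hl A hA C (hT𝒜 hC) hCA.symm
  rw [hmeet C hC hCA] at this
  exact (this.trans (card_le_card hsub)).not_gt hinf

theorem exists_card_le_sq_forall_lt_card_inter [Fintype α] {𝒜 : Finset (Finset α)} {k l : ℕ}
    (h𝒜 : 1 < #𝒜) (hk : ∀ A ∈ 𝒜, #A ≤ k) (hl : ∀ A ∈ 𝒜, ∀ B ∈ 𝒜, A ≠ B → l ≤ #(A ∩ B))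
    (hinf : #(𝒜.inf id) < l) : ∃ W : Finset α, #W ≤ k ^ 2 ∧ ∀ A ∈ 𝒜, l < #(A ∩ W) := by
  obtain ⟨A₀, hA₀, hA₀I⟩ : ∃ A₀ ∈ 𝒜, A₀ ≠ 𝒜.inf id := by
    by_contra! h
    exact h𝒜.not_ge (card_le_one.2 fun A hA B hB => (h A hA).trans (h B hB).symm)
  obtain ⟨T, hT𝒜, hA₀T, hTinf, hTcard⟩ := exists_subfamily_inf_eq hA₀
  have hT : 1 < #T := by
    by_contra! hT
    have : T = {A₀} :=
      eq_singleton_iff_unique_mem.2 ⟨hA₀T, fun B hB => card_le_one.1 hT B hB A₀ hA₀T⟩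
    rw [this, inf_singleton] at hTinf
    exact hA₀I hTinf
  refine ⟨T.sup id, ?_, fun A hA => lt_card_inter_sup_id hT𝒜 hT hTinf hinf hl hA⟩
  have hA₀k := hk A₀ hA₀
  calc #(T.sup id) ≤ #A₀ + #(T.erase A₀) * (k - l) :=
        card_sup_id_le (fun B hB => hk B (hT𝒜 hB))
          fun B hB hBA₀ => hl A₀ hA₀ B (hT𝒜 hB) hBA₀.symm
    _ ≤ k + k * (k - 1) :=
        add_le_add hA₀k (Nat.mul_le_mul (hTcard.trans ((card_le_card sdiff_subset).trans hA₀k))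
          (by omega))
    _ = k ^ 2 := by rcases k with _ | k <;> simp [sq, Nat.mul_succ, add_comm]

theorem card_le_choose_mul_sum_choose [Fintype α] {𝒜 : Finset (Finset α)} {L : Finset ℕ} {l : ℕ}
    {W : Finset α} (hL : ∀ A ∈ 𝒜, ∀ B ∈ 𝒜, A ≠ B → #(A ∩ B) ∈ L) (hl : IsLeast (L : Set ℕ) l)
    (hW : ∀ A ∈ 𝒜, l < #(A ∩ W)) :
    #𝒜 ≤ (#W).choose (l + 1) * ∑ j ∈ range #L, (Fintype.card α - (l + 1)).choose j := by
  have hcover : 𝒜 ⊆ (W.powersetCard (l + 1)).biUnion fun S => 𝒜.filter (S ⊆ ·) := by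
    intro A hA
    obtain ⟨S, hS, hScard⟩ := exists_subset_card_eq (hW A hA)
    exact mem_biUnion.2 ⟨S, mem_powersetCard.2 ⟨hS.trans inter_subset_right, hScard⟩,
      mem_filter.2 ⟨hA, hS.trans inter_subset_left⟩⟩
  have hfiber : ∀ S ∈ W.powersetCard (l + 1),
      #(𝒜.filter (S ⊆ ·)) ≤ ∑ j ∈ range #L, (Fintype.card α - (l + 1)).choose j := by
    intro S hS
    have hScard := (mem_powersetCard.1 hS).2
    rw [← card_erase_add_one (mem_coe.1 hl.1), ← hScard]
    refine card_le_sum_choose_of_subset_of_card_inter_mem (fun A hA => (mem_filter.1 hA).2)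
      (fun A hA B hB hAB => ?_) le_rfl
    rw [mem_filter] at hA hB
    have hSAB : #S ≤ #(A ∩ B) := card_le_card (subset_inter hA.2 hB.2)
    exact mem_erase.2 ⟨by omega, hL A hA.1 B hB.1 hAB⟩
  calc #𝒜 ≤ ∑ S ∈ W.powersetCard (l + 1), #(𝒜.filter (S ⊆ ·)) :=
        (card_le_card hcover).trans card_biUnion_le
    _ ≤ _ := by
        simpa only [card_powersetCard, smul_eq_mul] using sum_le_card_nsmul _ _ _ hfiber

theorem card_le_sum_choose_of_isLeast [Fintype α] {𝒜 : Finset (Finset α)} {L : Finset ℕ} {l k : ℕ}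
    (hL : ∀ A ∈ 𝒜, ∀ B ∈ 𝒜, A ≠ B → #(A ∩ B) ∈ L) (hl : IsLeast (L : Set ℕ) l)
    (hk : ∀ A ∈ 𝒜, #A ≤ k) (hn : (k ^ 2).choose (l + 1) * #L + l ≤ Fintype.card α) :
    #𝒜 ≤ ∑ j ∈ range (#L + 1), (Fintype.card α - l).choose j := by
  by_cases hinf : l ≤ #(𝒜.inf id)
  · obtain ⟨K, hK, hKcard⟩ := exists_subset_card_eq hinf
    rw [← hKcard]
    exact card_le_sum_choose_of_subset_of_card_inter_mem
      (fun A hA => hK.trans (inf_le (f := id) hA)) hL le_rfl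
  by_cases h𝒜 : #𝒜 ≤ 1
  · rw [sum_range_succ', Nat.choose_zero_right]
    omega
  obtain ⟨W, hW, hWA⟩ := exists_card_le_sq_forall_lt_card_inter (not_le.1 h𝒜) hk
    (fun A hA B hB hAB => hl.2 (hL A hA B hB hAB)) (not_le.1 hinf)
  calc #𝒜 ≤ (#W).choose (l + 1) * ∑ j ∈ range #L, (Fintype.card α - (l + 1)).choose j :=
        card_le_choose_mul_sum_choose hL hl hWA
    _ ≤ (k ^ 2).choose (l + 1) * ∑ j ∈ range #L, (Fintype.card α - l - 1).choose j := by
        rw [Nat.sub_sub]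
        gcongr
    _ ≤ _ := Nat.mul_sum_range_choose_sub_one_le (by omega)

end Finset

theorem stmt_1_general (s n m : ℕ) (hs : 0 < s)
    (l : Fin s → ℕ) (hl : StrictMono l)
    (A : Fin m → Finset (Fin n)) (hA : Function.Injective A)
    (hAL : ∀ i j, i ≠ j → ∃ t, (A i ∩ A j).card = l t)
    (k : ℕ) (hk₁ : ∀ j, (A j).card ≤ k)
    (hbig : n ≥ (k ^ 2).choose (l ⟨0, hs⟩ + 1) * s + l ⟨0, hs⟩) :
    m ≤ ∑ j ∈ Finset.range (s + 1), (n - l ⟨0, hs⟩).choose j := by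
  have hcardA : #(univ.image A) = m := by rw [card_image_of_injective _ hA, card_fin]
  have hcardL : #(univ.image l) = s := by rw [card_image_of_injective _ hl.injective, card_fin]
  have hleast : IsLeast (↑(univ.image l) : Set ℕ) (l ⟨0, hs⟩) := by
    simp only [coe_image, coe_univ, Set.image_univ]
    exact ⟨⟨_, rfl⟩, by rintro _ ⟨t, rfl⟩; exact hl.monotone (Fin.mk_le_mk.2 (Nat.zero_le _))⟩
  have key := card_le_sum_choose_of_isLeast (𝒜 := univ.image A) (k := k) ?_ hleast ?_
    (by rw [hcardL, Fintype.card_fin]; omega)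
  · rwa [hcardA, hcardL, Fintype.card_fin] at key
  · simp only [mem_image, mem_univ, true_and]
    rintro _ ⟨i, rfl⟩ _ ⟨j, rfl⟩ hij
    obtain ⟨t, ht⟩ := hAL i j fun h => hij (h ▸ rfl)
    exact ⟨t, ht.symm⟩
  · simp only [mem_image, mem_univ, true_and]
    rintro _ ⟨i, rfl⟩
    exact hk₁ i

/-- **Corollary 1.8.** If `ℒ = {l 0 < ⋯ < l (s-1)}` is a set of `s` nonnegative
integers, `A 1, …, A m` are pairwise distinct subsets of `[n]` whose pairwise
intersections have cardinality in `ℒ`, `k` is the maximum size of a member, and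
`n ≥ C(k², l₁+1)·s + l₁`, then `m ≤ C(n-l₁, s) + C(n-l₁, s-1) + ⋯ + C(n-l₁, 0)`. -/
theorem stmt_1 (s n m : ℕ) (hs : 0 < s) (hn : 0 < n) (hm : 0 < m)
    (l : Fin s → ℕ) (hl : StrictMono l)
    (A : Fin m → Finset (Fin n)) (hA : Function.Injective A)
    (hAL : ∀ i j, i ≠ j → ∃ t, (A i ∩ A j).card = l t)
    (k : ℕ) (hk₁ : ∀ j, (A j).card ≤ k) (hk₂ : ∃ j, (A j).card = k)
    (hbig : n ≥ (k ^ 2).choose (l ⟨0, hs⟩ + 1) * s + l ⟨0, hs⟩) :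
    m ≤ ∑ j ∈ Finset.range (s + 1), (n - l ⟨0, hs⟩).choose j :=
  stmt_1_general s n m hs l hl A hA hAL k hk₁ hbig
end

section
/- Let ℒ = {l₁, l₂, …, l_s} be a set of s integers with 0 < l₁ < l₂ < … < l_s. Suppose A₁, A₂, …, A_m and B₁, B₂, …, B_m are subsets of [n] such that: (i) |Aᵢ ∩ Bⱼ| ∈ ℒ for every pair i < j; (ii) Bᵢ ⊆ Aᵢ for all i ≤ m and |Aᵢ ∩ Bᵢ| ∉ ℒ for every k + 2 ≤ i ≤ m, where k is the maximum size of a member of {B₁, …, B_m}; (iii) ∩_{1 ≤ j ≤ k+1} Bⱼ = ∩_{1 ≤ j ≤ m} Bⱼ, |∩_{1 ≤ j ≤ m} Bⱼ| < l₁, and Aᵢ = Bᵢ for every i ≤ k + 1. If n ≥ (C(k² + k, l₁+1) + 1)·s + l₁, then m ≤ C(n−l₁, s) + C(n−l₁, s−1) + … + C(n−l₁, 0). -/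
/-!
Let `U` be the union of the first `k + 1` sets `B i` (which equal the `A i`). They all meet `B₁`
in at least `l₁` points, so `|U| ≤ k + k (k - l₁)`. A later `B i` meets each of them in at least
`l₁` points while their common intersection has fewer than `l₁`, so `B i ∩ U` has more than `l₁`
points and `B i` contains an `(l₁ + 1)`-subset `S` of `U`.

For a fixed `S`, the later indices with `S ⊆ B i` are bounded by the polynomial method: the
functions `C ↦ ∏_{ℓ ∈ ℒ, ℓ > l₁} (|B i ∩ C| - ℓ)`, evaluated at the sets `A j`, form a triangular
system with nonzero diagonal, hence are linearly independent, and on sets `C ⊇ S` they are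
polynomials of degree `< s` in the indicators of the points outside `S`. So each class has at most
`∑_{j < s} C(n - l₁ - 1, j)` members. The lower bound on `n` makes consecutive binomial
coefficients grow by a factor of `C(k² + k, l₁ + 1)`, which absorbs the `C(|U|, l₁ + 1)` classes
and the `k + 1` first indices into `∑_{j ≤ s} C(n - l₁, j)`.
-/

open Finset Module Submodule

section SubsetIndicator

variable (K : Type*) [Field K] {α : Type*} [DecidableEq α]

def subsetIndicator (D : Finset α) : Finset α → K := fun C => if D ⊆ C then 1 else 0

/-- Functions of `C` that are polynomials of degree at most `d` in the variables `[u ∈ C]`,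
`u ∈ R`. -/
def subsetIndicatorSpan (R : Finset α) (d : ℕ) : Submodule K (Finset α → K) :=
  span K (subsetIndicator K '' {D | D ⊆ R ∧ #D ≤ d})

variable {K}

lemma subsetIndicator_mem_subsetIndicatorSpan {R D : Finset α} {d : ℕ} (hDR : D ⊆ R)
    (hD : #D ≤ d) : subsetIndicator K D ∈ subsetIndicatorSpan K R d :=
  subset_span ⟨D, ⟨hDR, hD⟩, rfl⟩

lemma subsetIndicatorSpan_mono {R R' : Finset α} {d d' : ℕ} (hR : R ⊆ R') (hd : d ≤ d') :
    subsetIndicatorSpan K R d ≤ subsetIndicatorSpan K R' d' :=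
  span_mono <| Set.image_mono fun _ ⟨hDR, hD⟩ => ⟨hDR.trans hR, hD.trans hd⟩

lemma card_inter_mul_subsetIndicator (R D : Finset α) :
    (fun C => (#(R ∩ C) : K)) * subsetIndicator K D = ∑ u ∈ R, subsetIndicator K (insert u D) := by
  funext C
  by_cases hD : D ⊆ C
  · simp [subsetIndicator, hD, insert_subset_iff]
  · have : ∀ u, ¬ insert u D ⊆ C := fun u h => hD ((subset_insert u D).trans h)
    simp [subsetIndicator, hD, this]

lemma card_inter_add_const_mul_mem_subsetIndicatorSpan {R : Finset α} {d : ℕ} (c : K)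
    {f : Finset α → K} (hf : f ∈ subsetIndicatorSpan K R d) :
    (fun C => (#(R ∩ C) : K) + c) * f ∈ subsetIndicatorSpan K R (d + 1) := by
  refine (span_le.2 ?_ : _ ≤ (subsetIndicatorSpan K R (d + 1)).comap
    (LinearMap.mulLeft K fun C => (#(R ∩ C) : K) + c)) hf
  rintro _ ⟨D, ⟨hDR, hD⟩, rfl⟩
  have : (fun C => (#(R ∩ C) : K) + c) * subsetIndicator K D =
      (∑ u ∈ R, subsetIndicator K (insert u D)) + c • subsetIndicator K D := by
    rw [← card_inter_mul_subsetIndicator]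
    funext C
    simp [add_mul]
  simp only [SetLike.mem_coe, mem_comap, LinearMap.mulLeft_apply, this]
  refine add_mem (sum_mem fun u hu => ?_) (smul_mem _ c ?_)
  · exact subsetIndicator_mem_subsetIndicatorSpan (insert_subset hu hDR)
      ((card_insert_le u D).trans (by omega))
  · exact subsetIndicator_mem_subsetIndicatorSpan hDR (by omega)

lemma prod_card_inter_add_const_mem_subsetIndicatorSpan {β : Type*} (R : Finset α)
    (T : Finset β) (c : β → K) :
    ∏ t ∈ T, (fun C => (#(R ∩ C) : K) + c t) ∈ subsetIndicatorSpan K R #T := by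
  classical
  induction T using Finset.induction_on with
  | empty =>
    have : subsetIndicator K (∅ : Finset α) = 1 := by funext C; simp [subsetIndicator]
    simpa [this] using subsetIndicator_mem_subsetIndicatorSpan (K := K) (empty_subset R) le_rfl
  | insert t T ht ih =>
    rw [prod_insert ht, card_insert_of_notMem ht]
    exact card_inter_add_const_mul_mem_subsetIndicatorSpan (c t) ih

lemma card_le_sum_choose_of_linearIndependent {ι : Type*} [Fintype ι] {f : ι → Finset α → K}
    (hf : LinearIndependent K f) {R : Finset α} {d : ℕ}
    (hR : ∀ i, f i ∈ subsetIndicatorSpan K R d) :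
    Fintype.card ι ≤ ∑ j ∈ range (d + 1), (#R).choose j := by
  classical
  set E := ((range (d + 1)).biUnion fun j => R.powersetCard j).image (subsetIndicator K)
  have hE : subsetIndicatorSpan K R d = span K ↑E := by
    rw [subsetIndicatorSpan, coe_image, coe_biUnion]
    congr 2
    ext D
    simp
  calc Fintype.card ι = finrank K (span K (Set.range f)) := (finrank_span_eq_card hf).symm
    _ ≤ finrank K (span K (E : Set (Finset α → K))) :=
        finrank_mono (span_le.2 (Set.range_subset_iff.2 fun i => hE ▸ hR i))
    _ ≤ #E := finrank_span_finset_le_card E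
    _ ≤ #((range (d + 1)).biUnion fun j => R.powersetCard j) := card_image_le
    _ ≤ _ := card_biUnion_le.trans_eq (by simp)

end SubsetIndicator

lemma linearIndependent_of_eval_triangular_s5 {ι Ω K : Type*} [Ring K] [NoZeroDivisors K] [LinearOrder ι] [Fintype ι]
    (f : ι → Ω → K) (x : ι → Ω) (h_lt : ∀ p q, q < p → f p (x q) = 0)
    (h_diag : ∀ p, f p (x p) ≠ 0) : LinearIndependent K f := by
  rw [Fintype.linearIndependent_iff]
  intro g hg i
  induction i using WellFoundedLT.induction with
  | ind i ih =>
    have hi := congrFun hg (x i)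
    rw [Finset.sum_apply, Finset.sum_eq_single i] at hi
    · simpa [h_diag i] using hi
    · intro j _ hji
      rcases hji.lt_or_gt with hj | hj
      · simp [ih j hj]
      · simp [h_lt j i hj]
    · simp

lemma card_sdiff_inter_add_card {α : Type*} [DecidableEq α] {S B C : Finset α} (hSB : S ⊆ B)
    (hSC : S ⊆ C) : #((B \ S) ∩ C) + #S = #(C ∩ B) := by
  rw [← card_sdiff_add_card_eq_card (subset_inter hSC hSB)]
  congr 2
  ext x
  simp only [mem_inter, mem_sdiff]
  tauto

theorem card_le_sum_choose_of_skew_intersections {α ι : Type*} [Fintype α] [DecidableEq α]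
    [LinearOrder ι] (L : Finset ℕ) (S : Finset α) (T : Finset ι) (A B : ι → Finset α)
    (hSB : ∀ p ∈ T, S ⊆ B p) (hBA : ∀ p ∈ T, B p ⊆ A p) (hdiag : ∀ p ∈ T, #(B p) ∉ L)
    (hlt : ∀ p ∈ T, ∀ q ∈ T, q < p → #(A q ∩ B p) ∈ L) :
    #T ≤ ∑ j ∈ range (#{ℓ ∈ L | #S ≤ ℓ} + 1), (Fintype.card α - #S).choose j := by
  set L' := {ℓ ∈ L | #S ≤ ℓ}
  -- on sets `C ⊇ S` this is `∏ ℓ ∈ L', (#(C ∩ B p) - ℓ)`, of degree `#L'` in the points outside `S`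
  let f : T → Finset α → ℚ := fun p => ∏ ℓ ∈ L', fun C => (#((B p \ S) ∩ C) : ℚ) + (#S - ℓ : ℚ)
  have hf : ∀ p q : T, f p (A q) = ∏ ℓ ∈ L', ((#(A q ∩ B p) : ℚ) - ℓ) := by
    intro p q
    have := card_sdiff_inter_add_card (hSB p p.2) ((hSB q q.2).trans (hBA q q.2))
    simp only [f, Finset.prod_apply]
    refine prod_congr rfl fun ℓ _ => ?_
    rw [← this]
    push_cast
    ring
  have hind : LinearIndependent ℚ f := by
    refine linearIndependent_of_eval_triangular_s5 f (fun q => A q) (fun p q hqp => ?_) fun p => ?_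
    · have hmem := hlt p p.2 q q.2 hqp
      have hS : #S ≤ #(A q ∩ B p) :=
        card_le_card (subset_inter ((hSB q q.2).trans (hBA q q.2)) (hSB p p.2))
      rw [hf]
      exact prod_eq_zero (mem_filter.2 ⟨hmem, hS⟩) (sub_self _)
    · rw [hf, inter_eq_right.2 (hBA p p.2)]
      refine prod_ne_zero_iff.2 fun ℓ hℓ => sub_ne_zero.2 ?_
      exact_mod_cast ne_of_mem_of_not_mem (mem_filter.1 hℓ).1 (hdiag p p.2) |>.symm
  have hspan : ∀ p, f p ∈ subsetIndicatorSpan ℚ (univ \ S) #L' := fun p =>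
    subsetIndicatorSpan_mono (sdiff_subset_sdiff (subset_univ _) subset_rfl) le_rfl
      (prod_card_inter_add_const_mem_subsetIndicatorSpan _ _ _)
  simpa [card_univ_sdiff] using card_le_sum_choose_of_linearIndependent hind hspan

section SetFamilies

variable {ι α : Type*} [DecidableEq α]

lemma card_biUnion_le_of_le_card_inter [DecidableEq ι] {I : Finset ι} {i₀ : ι} (hi₀ : i₀ ∈ I)
    {B : ι → Finset α} {k l : ℕ} (hk : ∀ j ∈ I, #(B j) ≤ k)
    (hl : ∀ j ∈ I.erase i₀, l ≤ #(B i₀ ∩ B j)) :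
    #(I.biUnion B) ≤ k + (#I - 1) * (k - l) := by
  have hsub : I.biUnion B ⊆ B i₀ ∪ (I.erase i₀).biUnion fun j => B j \ B i₀ := by
    intro x hx
    obtain ⟨j, hj, hxj⟩ := mem_biUnion.1 hx
    by_cases hx₀ : x ∈ B i₀
    · exact mem_union_left _ hx₀
    · refine mem_union_right _ (mem_biUnion.2 ⟨j, mem_erase.2 ⟨?_, hj⟩, mem_sdiff.2 ⟨hxj, hx₀⟩⟩)
      rintro rfl
      exact hx₀ hxj
  have hnew : ∀ j ∈ I.erase i₀, #(B j \ B i₀) ≤ k - l := fun j hj => by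
    have := card_sdiff_add_card_inter (B j) (B i₀)
    have := hk j (mem_of_mem_erase hj)
    have := hl j hj
    rw [inter_comm] at this
    omega
  calc #(I.biUnion B) ≤ #(B i₀) + ∑ j ∈ I.erase i₀, #(B j \ B i₀) :=
        (card_le_card hsub).trans ((card_union_le _ _).trans (add_le_add_right card_biUnion_le _))
    _ ≤ k + (#I - 1) * (k - l) := by
        gcongr
        · exact hk i₀ hi₀
        · simpa [card_erase_of_mem hi₀] using sum_le_card_nsmul _ _ _ hnew

lemma card_le_choose_mul_of_le_card_inter {T : Finset ι} {U : Finset α} {F : ι → Finset α}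
    {r M : ℕ} (hT : ∀ i ∈ T, r ≤ #(F i ∩ U))
    (hM : ∀ S ⊆ U, #S = r → #{i ∈ T | S ⊆ F i} ≤ M) : #T ≤ (#U).choose r * M := by
  choose! σ hσ hσr using fun i hi => exists_subset_card_eq (hT i hi)
  have hσU : ∀ i ∈ T, σ i ∈ U.powersetCard r := fun i hi =>
    mem_powersetCard.2 ⟨(hσ i hi).trans inter_subset_right, hσr i hi⟩
  calc #T = ∑ S ∈ U.powersetCard r, #{i ∈ T | σ i = S} := card_eq_sum_card_fiberwise hσU
    _ ≤ ∑ _S ∈ U.powersetCard r, M := sum_le_sum fun S hS => by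
        obtain ⟨hSU, hSr⟩ := mem_powersetCard.1 hS
        refine (card_le_card (monotone_filter_right _ fun i hi hiS => ?_)).trans (hM S hSU hSr)
        exact hiS ▸ (hσ i hi).trans inter_subset_left
    _ = (#U).choose r * M := by simp

variable [Fintype α]

lemma lt_card_inter_biUnion_of_card_inf_lt {I : Finset ι} (hI : I.Nonempty) {B : ι → Finset α}
    {X : Finset α} {l : ℕ} (hinf : #(I.inf B) < l) (hl : ∀ j ∈ I, l ≤ #(B j ∩ X)) :
    l < #(X ∩ I.biUnion B) := by
  by_contra! hXU
  have hsub : ∀ j ∈ I, B j ∩ X ⊆ X ∩ I.biUnion B := fun j hj x hx =>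
    mem_inter.2 ⟨(mem_inter.1 hx).2, mem_biUnion.2 ⟨j, hj, (mem_inter.1 hx).1⟩⟩
  have heq : ∀ j ∈ I, B j ∩ X = X ∩ I.biUnion B := fun j hj =>
    eq_of_subset_of_card_le (hsub j hj) (hXU.trans (hl j hj))
  have hinf_sub : X ∩ I.biUnion B ⊆ I.inf B :=
    Finset.le_inf fun j hj => heq j hj ▸ inter_subset_left
  obtain ⟨j, hj⟩ := hI
  have := card_le_card hinf_sub
  have := hl j hj
  rw [heq j hj] at this
  omega

end SetFamilies

namespace Nat

lemma mul_choose_le_choose_succ {N s v j : ℕ} (hv : (N + 1) * s ≤ v + 1) (hj : j < s) :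
    N * v.choose j ≤ v.choose (j + 1) := by
  have hNj : N * (j + 1) ≤ v - j := by
    have : N * (j + 1) ≤ N * s := Nat.mul_le_mul_left N hj
    have : (N + 1) * s = N * s + s := by ring
    omega
  refine Nat.le_of_mul_le_mul_right ?_ j.succ_pos
  calc N * v.choose j * (j + 1) = v.choose j * (N * (j + 1)) := by ring
    _ ≤ v.choose j * (v - j) := Nat.mul_le_mul_left _ hNj
    _ = v.choose (j + 1) * (j + 1) := (choose_succ_right_eq v j).symm

lemma mul_sum_range_le_add_sum {a : ℕ → ℕ} {N r : ℕ} (h : ∀ j < r, N * a j ≤ a (j + 1)) :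
    N * ∑ j ∈ range r, a j ≤ a r + ∑ j ∈ range r, a j := by
  induction r with
  | zero => simp
  | succ r ih =>
    have := ih fun j hj => h j (by omega)
    have := h r r.lt_succ_self
    rw [sum_range_succ, mul_add]
    omega

lemma sum_range_succ_choose_succ (v s : ℕ) :
    ∑ j ∈ range (s + 1), (v + 1).choose j = 2 * ∑ j ∈ range s, v.choose j + v.choose s := by
  have hshift : ∑ j ∈ range s, v.choose (j + 1) + 1 = ∑ j ∈ range s, v.choose j + v.choose s := by
    have := sum_range_succ' (fun j => v.choose j) s
    rw [sum_range_succ, choose_zero_right] at this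
    omega
  rw [sum_range_succ', sum_congr rfl fun j _ => choose_succ_succ v j, sum_add_distrib,
    choose_zero_right, add_assoc, hshift]
  ring

lemma choose_succ_add_le {u b : ℕ} (hb : b ≤ u) (t : ℕ) :
    u.choose (b + 1) + t ≤ (u + t).choose (b + 1) := by
  induction t with
  | zero => simp
  | succ t ih =>
    have := choose_pos (n := u + t) (k := b) (by omega)
    rw [← add_assoc u t 1, choose_succ_succ']
    omega

lemma choose_add_mul_sub_add_le {k l : ℕ} (hl : 0 < l) (hlk : l ≤ k) :
    (k + k * (k - l)).choose (l + 1) + k ≤ (k ^ 2 + k).choose (l + 1) := by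
  have hsum : k + k * (k - l) + k * l = k ^ 2 + k := by
    rw [add_assoc, ← mul_add, Nat.sub_add_cancel hlk]
    ring
  have := choose_succ_add_le (u := k + k * (k - l)) (b := l) (by omega) (k * l)
  have := Nat.le_mul_of_pos_right k hl
  rw [hsum] at *
  omega

end Nat

lemma le_sum_range_choose_succ_of_le_add_mul {m k s v N N' : ℕ} (hs : 0 < s)
    (hv : (N + 1) * s ≤ v + 1) (hN' : N' + k ≤ N)
    (hm : m ≤ k + 1 + N' * ∑ j ∈ range s, v.choose j) :
    m ≤ ∑ j ∈ range (s + 1), (v + 1).choose j := by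
  rw [Nat.sum_range_succ_choose_succ]
  set X := ∑ j ∈ range s, v.choose j
  have hX : 1 ≤ X := by
    simpa using single_le_sum (f := fun j => v.choose j) (fun _ _ => Nat.zero_le _)
      (mem_range.2 hs)
  have hgeom : N * X ≤ v.choose s + X :=
    Nat.mul_sum_range_le_add_sum fun j hj => Nat.mul_choose_le_choose_succ hv hj
  have := Nat.mul_le_mul_right X hN'
  have := Nat.mul_le_mul_left (k + 1) hX
  nlinarith

section SkewSystem

variable {s n m k : ℕ} (hs : 0 < s) {l : Fin s → ℕ} {A B : Fin m → Finset (Fin n)}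

lemma card_filter_subset_le_sum_choose (hl : StrictMono l)
    (hi : ∀ i j : Fin m, i < j → ∃ t, #(A i ∩ B j) = l t) (hii₁ : ∀ i, B i ⊆ A i)
    (hii₂ : ∀ i : Fin m, k + 1 ≤ (i : ℕ) → ∀ t, #(A i ∩ B i) ≠ l t)
    {S : Finset (Fin n)} (hS : #S = l ⟨0, hs⟩ + 1) {T : Finset (Fin m)}
    (hT : ∀ i ∈ T, k + 1 ≤ (i : ℕ)) :
    #{i ∈ T | S ⊆ B i} ≤ ∑ j ∈ range s, (n - (l ⟨0, hs⟩ + 1)).choose j := by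
  have hL : #{ℓ ∈ univ.image l | #S ≤ ℓ} + 1 ≤ s := by
    have hsub : {ℓ ∈ univ.image l | #S ≤ ℓ} ⊆ (univ.image l).erase (l ⟨0, hs⟩) := fun ℓ hℓ => by
      rw [mem_filter] at hℓ
      exact mem_erase.2 ⟨by omega, hℓ.1⟩
    have := card_le_card hsub
    rw [card_erase_of_mem (mem_image_of_mem l (mem_univ _)), card_image_of_injective _ hl.injective,
      card_univ, Fintype.card_fin] at this
    omega
  refine (card_le_sum_choose_of_skew_intersections (univ.image l) S _ A B
    (fun p hp => (mem_filter.1 hp).2) (fun p _ => hii₁ p) (fun p hp => ?_)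
    fun p _ q _ hqp => ?_).trans ?_
  · obtain ⟨hpT, -⟩ := mem_filter.1 hp
    simpa [inter_eq_right.2 (hii₁ p), eq_comm] using hii₂ p (hT p hpT)
  · obtain ⟨t, ht⟩ := hi q p hqp
    exact ht ▸ mem_image_of_mem l (mem_univ t)
  · rw [Fintype.card_fin, ← hS]
    exact sum_le_sum_of_subset (range_subset_range.2 hL)

theorem le_add_choose_mul_sum_choose (hl : StrictMono l) (hm : k + 1 ≤ m)
    (hk₁ : ∀ i, #(B i) ≤ k)
    (hi : ∀ i j : Fin m, i < j → ∃ t, #(A i ∩ B j) = l t) (hii₁ : ∀ i, B i ⊆ A i)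
    (hii₂ : ∀ i : Fin m, k + 1 ≤ (i : ℕ) → ∀ t, #(A i ∩ B i) ≠ l t)
    (hiii₁ : ({j | (j : ℕ) < k + 1} : Finset (Fin m)).inf B = univ.inf B)
    (hiii₂ : #(univ.inf B) < l ⟨0, hs⟩)
    (hiii₃ : ∀ i : Fin m, (i : ℕ) < k + 1 → A i = B i) :
    m ≤ k + 1 + (k + k * (k - l ⟨0, hs⟩)).choose (l ⟨0, hs⟩ + 1) *
      ∑ j ∈ range s, (n - (l ⟨0, hs⟩ + 1)).choose j := by
  set l₀ := l ⟨0, hs⟩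
  set early : Finset (Fin m) := {j | (j : ℕ) < k + 1}
  set late : Finset (Fin m) := {j | ¬(j : ℕ) < k + 1}
  have hinter : ∀ i j, i < j → l₀ ≤ #(A i ∩ B j) := fun i j hij => by
    obtain ⟨t, ht⟩ := hi i j hij
    exact ht ▸ hl.monotone (Nat.zero_le _)
  have hearly : #early = k + 1 := Fin.card_filter_val_lt.trans (min_eq_right hm)
  have hi₀ : (⟨0, by omega⟩ : Fin m) ∈ early := by simp [early]
  have hU : #(early.biUnion B) ≤ k + k * (k - l₀) := by
    have := card_biUnion_le_of_le_card_inter hi₀ (fun j _ => hk₁ j) fun j hj => by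
      rw [← hiii₃ _ (Nat.zero_lt_succ k)]
      exact hinter _ _ (Fin.lt_def.2 (Nat.pos_of_ne_zero fun h => (mem_erase.1 hj).1 (Fin.ext h)))
    rwa [hearly, Nat.add_sub_cancel] at this
  have hmeet : ∀ i ∈ late, l₀ + 1 ≤ #(B i ∩ early.biUnion B) := fun i hi =>
    lt_card_inter_biUnion_of_card_inf_lt ⟨_, hi₀⟩ (hiii₁ ▸ hiii₂) fun j hj => by
      rw [← hiii₃ j (mem_filter.1 hj).2]
      exact hinter j i (Fin.lt_def.2 (by simp [early, late] at hi hj; omega))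
  have hlate := card_le_choose_mul_of_le_card_inter hmeet fun S _ hS =>
    card_filter_subset_le_sum_choose hs hl hi hii₁ hii₂ hS fun i hi => by
      simp [late] at hi; omega
  calc m = #early + #late := ((card_filter_add_card_filter_not _).trans (card_fin m)).symm
    _ ≤ _ := add_le_add hearly.le
      (hlate.trans (Nat.mul_le_mul_right _ (Nat.choose_le_choose _ hU)))

end SkewSystem

-- Indices are `0`-based: `(i : ℕ) < k + 1` is the paper's `i ≤ k + 1`.
theorem stmt_5_general (s n m k : ℕ) (hs : 0 < s)
    (l : Fin s → ℕ) (hl : StrictMono l)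
    (hm : k + 1 ≤ m)
    (A B : Fin m → Finset (Fin n))
    (hk₁ : ∀ i, (B i).card ≤ k)
    (hi : ∀ i j : Fin m, i < j → ∃ t, (A i ∩ B j).card = l t)
    (hii₁ : ∀ i, B i ⊆ A i)
    (hii₂ : ∀ i : Fin m, k + 1 ≤ (i : ℕ) → ∀ t, (A i ∩ B i).card ≠ l t)
    (hiii₁ : (Finset.univ.filter fun j : Fin m => (j : ℕ) < k + 1).inf B =
      Finset.univ.inf B)
    (hiii₂ : (Finset.univ.inf B).card < l ⟨0, hs⟩)
    (hiii₃ : ∀ i : Fin m, (i : ℕ) < k + 1 → A i = B i)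
    (hbig : n ≥ ((k ^ 2 + k).choose (l ⟨0, hs⟩ + 1) + 1) * s + l ⟨0, hs⟩) :
    m ≤ ∑ j ∈ Finset.range (s + 1), (n - l ⟨0, hs⟩).choose j := by
  set l₀ := l ⟨0, hs⟩
  have hN : (k + k * (k - l₀)).choose (l₀ + 1) + k ≤ (k ^ 2 + k).choose (l₀ + 1) := by
    rcases Nat.eq_zero_or_pos k with rfl | hk
    · simp
    · obtain ⟨t, ht⟩ := hi ⟨0, by omega⟩ ⟨1, by omega⟩ (Fin.mk_lt_mk.2 Nat.zero_lt_one)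
      refine Nat.choose_add_mul_sub_add_le (Nat.zero_lt_of_lt hiii₂) ?_
      calc l₀ ≤ l t := hl.monotone (Nat.zero_le _)
        _ = #(A _ ∩ B _) := ht.symm
        _ ≤ k := (card_le_card inter_subset_right).trans (hk₁ _)
  have hsN : s ≤ ((k ^ 2 + k).choose (l₀ + 1) + 1) * s := Nat.le_mul_of_pos_left s (by omega)
  rw [show n - l₀ = n - (l₀ + 1) + 1 by omega]
  exact le_sum_range_choose_succ_of_le_add_mul hs (by omega) hN
    (le_add_choose_mul_sum_choose hs hl hm hk₁ hi hii₁ hii₂ hiii₁ hiii₂ hiii₃)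

/-- **Proposition 3.3.** (Indices `0, …, m-1` here correspond to `1, …, m` in the paper.)
Let `ℒ = {l 0 < ⋯ < l (s-1)}` be a set of `s` positive integers, and let
`A 0, …, A (m-1)` and `B 0, …, B (m-1)` be subsets of `[n]` such that:
(i) `|A i ∩ B j| ∈ ℒ` for `i < j`;
(ii) `B i ⊆ A i` for all `i`, and `|A i ∩ B i| ∉ ℒ` whenever `i ≥ k + 1`
(paper: `k + 2 ≤ i ≤ m` in `1`-based indexing), where `k` is the maximum size of a `B i`;
(iii) `⋂_{i < k+1} B i = ⋂_{i < m} B i`, `|⋂_{i < m} B i| < l₁`, and `A i = B i` for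
all `i < k + 1` (paper: `i ≤ k + 1` in `1`-based indexing).
If `n ≥ (C(k²+k, l₁+1) + 1)·s + l₁`, then
`m ≤ C(n-l₁, s) + C(n-l₁, s-1) + ⋯ + C(n-l₁, 0)`. -/
theorem stmt_5 (s n m k : ℕ) (hs : 0 < s)
    (l : Fin s → ℕ) (hl : StrictMono l) (hlpos : 0 < l ⟨0, hs⟩)
    (hm : k + 1 ≤ m)
    (A B : Fin m → Finset (Fin n))
    (hk₁ : ∀ i, (B i).card ≤ k) (hk₂ : ∃ i, (B i).card = k)
    (hi : ∀ i j : Fin m, i < j → ∃ t, (A i ∩ B j).card = l t)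
    (hii₁ : ∀ i, B i ⊆ A i)
    (hii₂ : ∀ i : Fin m, k + 1 ≤ (i : ℕ) → ∀ t, (A i ∩ B i).card ≠ l t)
    (hiii₁ : (Finset.univ.filter fun j : Fin m => (j : ℕ) < k + 1).inf B =
      Finset.univ.inf B)
    (hiii₂ : (Finset.univ.inf B).card < l ⟨0, hs⟩)
    (hiii₃ : ∀ i : Fin m, (i : ℕ) < k + 1 → A i = B i)
    (hbig : n ≥ ((k ^ 2 + k).choose (l ⟨0, hs⟩ + 1) + 1) * s + l ⟨0, hs⟩) :
    m ≤ ∑ j ∈ Finset.range (s + 1), (n - l ⟨0, hs⟩).choose j :=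
  stmt_5_general s n m k hs l hl hm A B hk₁ hi hii₁ hii₂ hiii₁ hiii₂ hiii₃ hbig
end

section
/- Let l₁ be a positive integer and 𝔽_q be a finite field of order q. Let 𝒢 be a collection of subspaces of an n-dimensional vector space W over 𝔽_q with dim(∩_{G ∈ 𝒢} G) = 0. Let V be a subspace of W with V ∉ 𝒢 such that dim(V ∩ G) ≥ l₁ for each G ∈ 𝒢, and let P be the subspace spanned by all members of 𝒢. Then dim(P ∩ V) ≥ l₁ + 1. -/
/-- **Lemma 4.2.** Let `l₁` be a positive integer and let `𝒢` be a (nonempty)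
collection of subspaces of an `n`-dimensional vector space `W` over `𝔽_q` with
`dim(⋂_{G ∈ 𝒢} G) = 0`. Let `V ∉ 𝒢` be a subspace of `W` with `dim(V ⊓ G) ≥ l₁`
for each `G ∈ 𝒢`, and let `P` be the subspace spanned by all members of `𝒢`.
Then `dim(P ⊓ V) ≥ l₁ + 1`. -/
theorem stmt_10 (q n l₁ : ℕ) (hl₁ : 0 < l₁)
    (F : Type*) [Field F] [Fintype F] (hq : Fintype.card F = q)
    (W : Type*) [AddCommGroup W] [Module F W] [FiniteDimensional F W]
    (hn : Module.finrank F W = n)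
    (G : Finset (Submodule F W)) (hG : G.Nonempty)
    (hint : Module.finrank F (G.inf id : Submodule F W) = 0)
    (V : Submodule F W) (hV : V ∉ G)
    (hVG : ∀ U ∈ G, l₁ ≤ Module.finrank F (V ⊓ U : Submodule F W)) :
    l₁ + 1 ≤ Module.finrank F (G.sup id ⊓ V : Submodule F W) := by
  by_contra h
  push_neg at h
  set S : Submodule F W := G.sup id ⊓ V with hS
  have hle : ∀ U ∈ G, (V ⊓ U : Submodule F W) ≤ S := fun U hU =>
    le_inf (le_trans inf_le_right (Finset.le_sup (f := id) hU)) inf_le_left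
  obtain ⟨U₀, hU₀⟩ := hG
  have h1 : l₁ ≤ Module.finrank F S :=
    le_trans (hVG U₀ hU₀) (Submodule.finrank_mono (hle U₀ hU₀))
  have heq : ∀ U ∈ G, (V ⊓ U : Submodule F W) = S := fun U hU =>
    Submodule.eq_of_le_of_finrank_le (hle U hU) (le_trans (by omega) (hVG U hU))
  have hSinf : S ≤ G.inf id := Finset.le_inf fun U hU => (heq U hU) ▸ inf_le_right
  have := Submodule.finrank_mono (R := F) hSinf
  omega
end

section
/- Let ℒ = {l₁, l₂, …, l_s} be a set of s nonnegative integers with l₁ < l₂ < … < l_s and let 𝔽_q be a finite field of order q, q a prime power. Suppose 𝒱 = {V₁, V₂, …, V_m} is a collection of m pairwise distinct subspaces of an n-dimensional vector space over 𝔽_q such that dim(Vᵢ ∩ Vⱼ) ∈ ℒ for any distinct Vᵢ, Vⱼ ∈ 𝒱. Let k = max{dim(Vⱼ) : 1 ≤ j ≤ m}. If q^{n − l₁} − 1 ≥ (q^s − 1)·[k² choose l₁+1]_q, then m ≤ [n−l₁ choose s]_q + [n−l₁ choose s−1]_q + … + [n−l₁ choose 0]_q. -/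
/-- The Gaussian (`q`-)binomial coefficient
`[a choose b]_q = ∏_{i=0}^{b-1} (q^(a-i) - 1)/(q^(b-i) - 1)`, as a rational number. -/
def gaussBinom (q a b : ℕ) : ℚ :=
  ∏ i ∈ Finset.range b, ((q : ℚ) ^ (a - i) - 1) / ((q : ℚ) ^ (b - i) - 1)

open Module Submodule Finset

section GBlemmas

variable {q a a' b : ℕ}

lemma GB.den_pos (hq : 2 ≤ q) {i b : ℕ} (hi : i < b) : (0:ℚ) < (q:ℚ) ^ (b - i) - 1 := by
  have h1 : (1:ℚ) < (q:ℚ) := by exact_mod_cast hq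
  have : (1:ℚ) < (q:ℚ) ^ (b - i) := one_lt_pow₀ h1 (by omega)
  linarith

lemma GB.num_nonneg (hq : 2 ≤ q) (a i : ℕ) : (0:ℚ) ≤ (q:ℚ) ^ (a - i) - 1 := by
  have h1 : (1:ℚ) ≤ (q:ℚ) := by exact_mod_cast (by omega : 1 ≤ q)
  have := one_le_pow₀ (n := a - i) h1
  linarith

lemma GB.nonneg (hq : 2 ≤ q) : 0 ≤ gaussBinom q a b :=
  Finset.prod_nonneg fun i hi =>
    div_nonneg (GB.num_nonneg hq a i) (le_of_lt (GB.den_pos hq (mem_range.mp hi)))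

lemma GB.zero_right (q a : ℕ) : gaussBinom q a 0 = 1 := by simp [gaussBinom]

lemma GB.mono_left (hq : 2 ≤ q) (h : a ≤ a') : gaussBinom q a b ≤ gaussBinom q a' b := by
  have h1 : (1:ℚ) ≤ (q:ℚ) := by exact_mod_cast (by omega : 1 ≤ q)
  refine Finset.prod_le_prod (fun i hi => div_nonneg (GB.num_nonneg hq a i)
      (le_of_lt (GB.den_pos hq (mem_range.mp hi)))) (fun i hi => ?_)
  refine (div_le_div_iff_of_pos_right (GB.den_pos hq (mem_range.mp hi))).mpr ?_
  have : (q:ℚ) ^ (a - i) ≤ (q:ℚ) ^ (a' - i) := pow_le_pow_right₀ h1 (Nat.sub_le_sub_right h i)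
  linarith

lemma GB.succ (q a b : ℕ) :
    gaussBinom q a (b+1) = gaussBinom q (a-1) b * (((q:ℚ)^a - 1)/((q:ℚ)^(b+1) - 1)) := by
  unfold gaussBinom
  rw [Finset.prod_range_succ']
  congr 1
  apply Finset.prod_congr rfl
  intro i _
  have e1 : a - (i+1) = a - 1 - i := by omega
  have e2 : b + 1 - (i+1) = b - i := by omega
  rw [e1, e2]

end GBlemmas

section Counting

variable {F M : Type*} [Field F] [Fintype F] [AddCommGroup M] [Module F M]
  [FiniteDimensional F M]

lemma natCard_submodule (U : Submodule F M) :
    Nat.card U = Fintype.card F ^ finrank F U := by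
  have : Finite M := Module.finite_of_finite F
  have : Fintype U := Fintype.ofFinite U
  rw [Nat.card_eq_fintype_card]
  exact card_eq_pow_finrank

lemma card_submodule_aux (j : ℕ) (hj : j ≤ finrank F M) :
    Nat.card {U : Submodule F M // finrank F U = j} *
      ∏ i : Fin j, (Fintype.card F ^ j - Fintype.card F ^ (i : ℕ))
      = ∏ i : Fin j, (Fintype.card F ^ finrank F M - Fintype.card F ^ (i : ℕ)) := by
  classical
  have hfm : Finite M := Module.finite_of_finite F
  have hfs : Finite (Submodule F M) :=
    Finite.of_injective (fun U => (U : Set M)) SetLike.coe_injective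
  set q := Fintype.card F with hq
  let Inj := {s : Fin j → M // LinearIndependent F s}
  let SJ := {U : Submodule F M // finrank F U = j}
  haveI : Fintype SJ := Fintype.ofFinite SJ
  haveI : Finite Inj := by
    exact Finite.of_injective (fun s => s.1) Subtype.val_injective
  let φ : Inj → SJ := fun s => ⟨Submodule.span F (Set.range s.1), by
     rw [finrank_span_eq_card s.2, Fintype.card_fin]⟩
  haveI : Fintype Inj := Fintype.ofFinite _
  haveI instF : ∀ U : SJ, Fintype {s : Inj // φ s = U} := fun U => Fintype.ofFinite _
  have h1 : Nat.card Inj = ∑ U : SJ, Nat.card {s : Inj // φ s = U} := by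
    rw [← Nat.card_congr (Equiv.sigmaFiberEquiv φ)]
    rw [Nat.card_eq_fintype_card, Fintype.card_sigma]
    refine Finset.sum_congr rfl fun U _ => (Nat.card_eq_fintype_card).symm
  have h2 : ∀ U : SJ, Nat.card {s : Inj // φ s = U} = ∏ i : Fin j, (q ^ j - q ^ (i:ℕ)) := by
    intro U
    have hU : finrank F U.1 = j := U.2
    have key : {s : Inj // φ s = U} ≃ {t : Fin j → U.1 // LinearIndependent F t} :=
      { toFun := fun s => ⟨fun i => ⟨s.1.1 i, by
            have h := congrArg Subtype.val s.2
            simp only [φ] at h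
            exact h ▸ Submodule.subset_span (Set.mem_range_self i)⟩,
          LinearIndependent.of_comp U.1.subtype s.1.2⟩
        invFun := fun t => ⟨⟨fun i => (t.1 i : M),
            t.2.map' U.1.subtype (Submodule.ker_subtype _)⟩, by
            apply Subtype.ext
            show Submodule.span F (Set.range fun i => ((t.1 i : M))) = U.1
            have hrange : (Set.range fun i => ((t.1 i : M)))
                = U.1.subtype '' (Set.range t.1) := by
              rw [← Set.range_comp]; rfl
            rw [hrange, ← Submodule.map_span,
              t.2.span_eq_top_of_card_eq_finrank' (by rw [Fintype.card_fin, hU]),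
              Submodule.map_subtype_top]⟩
        left_inv := fun s => Subtype.ext (Subtype.ext (funext fun i => rfl))
        right_inv := fun t => Subtype.ext (funext fun i => Subtype.ext rfl) }
    rw [Nat.card_congr key]
    have := card_linearIndependent (K := F) (V := U.1) (k := j) (le_of_eq hU.symm)
    rw [this, hU]
  have h3 : Nat.card Inj = ∏ i : Fin j, (q ^ finrank F M - q ^ (i:ℕ)) :=
    card_linearIndependent (K := F) (V := M) hj
  rw [h1, Finset.sum_congr rfl (fun U _ => h2 U), Finset.sum_const, Finset.card_univ,
    smul_eq_mul] at h3
  rw [← h3, Nat.card_eq_fintype_card]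

end Counting

section Counting2

variable {F M : Type*} [Field F] [Fintype F] [AddCommGroup M] [Module F M]
  [FiniteDimensional F M]

theorem card_submodule_eq_gauss (j : ℕ) :
    (Nat.card {U : Submodule F M // finrank F U = j} : ℚ)
      = gaussBinom (Fintype.card F) (finrank F M) j := by
  classical
  set q := Fintype.card F with hqdef
  set n := finrank F M with hndef
  have hq2 : 2 ≤ q := Fintype.one_lt_card
  by_cases hj : j ≤ n
  · have key := card_submodule_aux (F := F) (M := M) j hj
    have hcast : ∀ (N : ℕ), j ≤ N →
        ((∏ i : Fin j, (q ^ N - q ^ (i:ℕ)) : ℕ) : ℚ)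
          = ∏ i : Fin j, ((q:ℚ)^N - (q:ℚ)^(i:ℕ)) := by
      intro N hN
      rw [Nat.cast_prod]
      refine Finset.prod_congr rfl fun i _ => ?_
      have hle : q ^ (i:ℕ) ≤ q ^ N := Nat.pow_le_pow_right (by omega) (by omega)
      rw [Nat.cast_sub hle]
      push_cast
      ring
    have h1 : (1:ℚ) < (q:ℚ) := by exact_mod_cast hq2
    have hden : ∀ i : Fin j, (0:ℚ) < (q:ℚ)^j - (q:ℚ)^(i:ℕ) := fun i => by
      have := pow_lt_pow_right₀ h1 i.2
      linarith
    have hBpos : (0:ℚ) < ∏ i : Fin j, ((q:ℚ)^j - (q:ℚ)^(i:ℕ)) :=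
      Finset.prod_pos fun i _ => hden i
    have keyQ : (Nat.card {U : Submodule F M // finrank F U = j} : ℚ) *
        ∏ i : Fin j, ((q:ℚ)^j - (q:ℚ)^(i:ℕ)) = ∏ i : Fin j, ((q:ℚ)^n - (q:ℚ)^(i:ℕ)) := by
      have hc := congrArg (Nat.cast : ℕ → ℚ) key
      rwa [Nat.cast_mul, hcast j le_rfl, hcast n hj] at hc
    have hgauss : gaussBinom q n j
        = ∏ i : Fin j, ((q:ℚ)^n - (q:ℚ)^(i:ℕ)) / ((q:ℚ)^j - (q:ℚ)^(i:ℕ)) := by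
      unfold gaussBinom
      rw [← Fin.prod_univ_eq_prod_range
        (fun i => ((q:ℚ)^(n - i) - 1)/((q:ℚ)^(j - i) - 1)) j]
      refine Finset.prod_congr rfl fun i _ => ?_
      have e1 : (q:ℚ)^n = (q:ℚ)^(n - (i:ℕ)) * (q:ℚ)^(i:ℕ) := by
        rw [← pow_add]; congr 1; omega
      have e2 : (q:ℚ)^j = (q:ℚ)^(j - (i:ℕ)) * (q:ℚ)^(i:ℕ) := by
        rw [← pow_add]; congr 1; omega
      have hd1 : (q:ℚ)^(j - (i:ℕ)) - 1 ≠ 0 := ne_of_gt (GB.den_pos hq2 i.2)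
      have hd2 : (q:ℚ)^j - (q:ℚ)^(i:ℕ) ≠ 0 := ne_of_gt (hden i)
      rw [div_eq_div_iff hd1 hd2, e1, e2]
      ring
    rw [hgauss, Finset.prod_div_distrib, eq_div_iff (ne_of_gt hBpos)]
    exact keyQ
  · have hE : IsEmpty {U : Submodule F M // finrank F U = j} :=
      ⟨fun U => hj (U.2 ▸ Submodule.finrank_le U.1)⟩
    rw [Nat.card_of_isEmpty]
    have hz : gaussBinom q n j = 0 := by
      apply Finset.prod_eq_zero (Finset.mem_range.mpr (show n < j by omega))
      simp [Nat.sub_self]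
    rw [hz, Nat.cast_zero]

end Counting2

section QABS

variable {F M ι : Type*} [Field F] [Fintype F] [AddCommGroup M] [Module F M]
  [FiniteDimensional F M] [Fintype ι]

theorem qABS (r : ℕ) (l' : Fin r → ℕ) (V' : ι → Submodule F M)
    (hinj : Function.Injective V')
    (hL : ∀ i j, i ≠ j → ∃ t, finrank F (V' i ⊓ V' j : Submodule F M) = l' t) :
    (Fintype.card ι : ℚ) ≤
      ∑ j ∈ Finset.range (r+1), gaussBinom (Fintype.card F) (finrank F M) j := by
  classical
  set q := Fintype.card F with hqdef
  have hq2 : 2 ≤ q := Fintype.one_lt_card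
  have h1q : (1:ℚ) < (q:ℚ) := by exact_mod_cast hq2
  have hfm : Finite M := Module.finite_of_finite F
  have hfs : Finite (Submodule F M) :=
    Finite.of_injective (fun U => (U : Set M)) SetLike.coe_injective
  haveI : ∀ i, Fintype (V' i) := fun i => Fintype.ofFinite _
  set d : ι → ℕ := fun i => finrank F (V' i) with hddef
  set T : ι → Finset (Fin r) := fun i => univ.filter (fun t => l' t < d i) with hTdef
  set f : ι → ι → ℚ := fun i j =>
    ∏ t ∈ T i, ((Nat.card (V' i ⊓ V' j : Submodule F M) : ℚ) - (q:ℚ) ^ l' t) with hfdef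
  have hcard : ∀ i j, (Nat.card (V' i ⊓ V' j : Submodule F M) : ℚ)
      = (q:ℚ) ^ finrank F (V' i ⊓ V' j : Submodule F M) := fun i j => by
    rw [natCard_submodule]; push_cast; rfl
  -- diagonal is nonzero
  have hdiag : ∀ i, f i i ≠ 0 := by
    intro i
    rw [hfdef]
    apply Finset.prod_ne_zero_iff.mpr
    intro t ht
    have hlt : l' t < d i := (Finset.mem_filter.mp ht).2
    have hii : (V' i ⊓ V' i : Submodule F M) = V' i := inf_idem _
    rw [hcard, hii]
    have : (q:ℚ)^(l' t) < (q:ℚ)^(d i) := pow_lt_pow_right₀ h1q hlt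
    intro h
    rw [sub_eq_zero] at h
    rw [h] at this
    exact lt_irrefl _ this
  -- off-diagonal vanishing
  have hzero : ∀ i j, i ≠ j → ¬ (V' i ≤ V' j) → f i j = 0 := by
    intro i j hij hle
    obtain ⟨t, ht⟩ := hL i j hij
    have hmono : finrank F (V' i ⊓ V' j : Submodule F M) ≤ d i :=
      Submodule.finrank_mono inf_le_left
    have hlt : finrank F (V' i ⊓ V' j : Submodule F M) < d i := by
      rcases lt_or_eq_of_le hmono with h | h
      · exact h
      · exfalso
        have := Submodule.eq_of_le_of_finrank_le (inf_le_left (b := V' j)) (le_of_eq h.symm)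
        exact hle (this ▸ inf_le_right)
    rw [hfdef]
    apply Finset.prod_eq_zero (i := t)
    · exact Finset.mem_filter.mpr ⟨Finset.mem_univ t, ht ▸ hlt⟩
    · rw [hcard, ht, sub_self]
  -- linear independence
  have hind : LinearIndependent ℚ f := by
    rw [Fintype.linearIndependent_iff]
    intro g hg
    by_contra hc
    push_neg at hc
    obtain ⟨i0, hi0⟩ := hc
    set S : Finset ι := univ.filter (fun i => g i ≠ 0) with hSdef
    have hSne : S.Nonempty := ⟨i0, by simp [hSdef, hi0]⟩
    obtain ⟨i, hiS, hminim⟩ := S.exists_min_image d hSne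
    have hgi : g i ≠ 0 := (Finset.mem_filter.mp hiS).2
    have heval : ∑ j, g j * f j i = 0 := by
      have := congrFun hg i
      simpa [Finset.sum_apply] using this
    have hsingle : ∑ j, g j * f j i = g i * f i i := by
      apply Finset.sum_eq_single
      · intro j _ hji
        by_cases hgj : g j = 0
        · rw [hgj, zero_mul]
        · have hjS : j ∈ S := Finset.mem_filter.mpr ⟨Finset.mem_univ j, hgj⟩
          have hdij : d i ≤ d j := hminim j hjS
          have : f j i = 0 := by
            apply hzero j i hji
            intro hle
            have h1 : d j ≤ d i := Submodule.finrank_mono hle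
            have heq := Submodule.eq_of_le_of_finrank_le hle hdij
            exact hji (hinj heq)
          rw [this, mul_zero]
      · intro h
        exact absurd (Finset.mem_univ i) h
    rw [hsingle] at heval
    rcases mul_eq_zero.mp heval with h | h
    · exact hgi h
    · exact hdiag i h
  -- span structure
  set e : M → ι → ℚ := fun x j => if x ∈ V' j then 1 else 0 with hedef
  set SR := {U : Submodule F M // finrank F U ≤ r} with hSRdef
  haveI : Fintype SR := Fintype.ofFinite _
  set gfun : SR → ι → ℚ := fun U j => if U.1 ≤ V' j then 1 else 0 with hgfundef
  set P : Submodule ℚ (ι → ℚ) := Submodule.span ℚ (Set.range gfun) with hPdef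
  have hmem : ∀ i, f i ∈ P := by
    intro i
    set c : Fin r → (V' i) → ℚ := fun t x => if x = 0 then 1 - (q:ℚ)^(l' t) else 1 with hcdef
    have hstep1 : ∀ j, (Nat.card (V' i ⊓ V' j : Submodule F M) : ℚ) = ∑ x : V' i, e x.1 j := by
      intro j
      have eqv : {x : V' i // (x:M) ∈ V' j} ≃ (V' i ⊓ V' j : Submodule F M) :=
        ⟨fun x => ⟨x.1.1, x.1.2, x.2⟩, fun y => ⟨⟨y.1, y.2.1⟩, y.2.2⟩,
          fun _ => rfl, fun _ => rfl⟩
      rw [← Nat.card_congr eqv, Nat.card_eq_fintype_card, Fintype.card_subtype]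
      rw [hedef]
      simp only [Finset.sum_boole]
    have hstep2 : ∀ t j, ((Nat.card (V' i ⊓ V' j : Submodule F M) : ℚ) - (q:ℚ)^(l' t))
        = ∑ x : V' i, c t x * e x.1 j := by
      intro t j
      rw [hstep1 j]
      have hsplit : ∑ x : V' i, c t x * e x.1 j
          = ∑ x : V' i, e x.1 j + ∑ x : V' i, (c t x - 1) * e x.1 j := by
        rw [← Finset.sum_add_distrib]
        apply Finset.sum_congr rfl
        intro x _
        ring
      rw [hsplit]
      have hone : ∑ x : V' i, (c t x - 1) * e x.1 j = - (q:ℚ)^(l' t) := by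
        rw [Finset.sum_eq_single (0 : V' i)]
        · have h0 : ((0 : V' i) : M) ∈ V' j := Submodule.zero_mem _
          rw [hcdef, hedef]
          simp [h0]
        · intro x _ hx
          rw [hcdef]
          simp [hx]
        · intro h
          exact absurd (Finset.mem_univ _) h
      rw [hone]
      ring
    have hexp : f i = fun j => ∑ p ∈ (T i).pi (fun _ => (univ : Finset (V' i))),
        (∏ x ∈ (T i).attach, c x.1 (p x.1 x.2)) *
          (∏ x ∈ (T i).attach, e ((p x.1 x.2 : V' i) : M) j) := by
      funext j
      rw [hfdef]
      simp only []
      calc ∏ t ∈ T i, ((Nat.card (V' i ⊓ V' j : Submodule F M) : ℚ) - (q:ℚ) ^ l' t)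
          = ∏ t ∈ T i, ∑ x : V' i, c t x * e x.1 j := by
            exact Finset.prod_congr rfl fun t _ => hstep2 t j
        _ = ∑ p ∈ (T i).pi (fun _ => (univ : Finset (V' i))),
              ∏ x ∈ (T i).attach, (c x.1 (p x.1 x.2) * e ((p x.1 x.2 : V' i) : M) j) := by
            exact Finset.prod_sum (T i) (fun _ => (univ : Finset (V' i)))
              (fun t x => c t x * e x.1 j)
        _ = _ := by
            apply Finset.sum_congr rfl
            intro p _
            rw [Finset.prod_mul_distrib]
    rw [hexp]
    have hswap : (fun j => ∑ p ∈ (T i).pi (fun _ => (univ : Finset (V' i))),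
        (∏ x ∈ (T i).attach, c x.1 (p x.1 x.2)) *
          (∏ x ∈ (T i).attach, e ((p x.1 x.2 : V' i) : M) j))
        = ∑ p ∈ (T i).pi (fun _ => (univ : Finset (V' i))),
            (fun j => (∏ x ∈ (T i).attach, c x.1 (p x.1 x.2)) *
              (∏ x ∈ (T i).attach, e ((p x.1 x.2 : V' i) : M) j)) := by
      funext j
      rw [Finset.sum_apply]
    rw [hswap]
    apply Submodule.sum_mem
    intro p _
    have hdim : finrank F (Submodule.span F
        (Set.range (fun x : {t // t ∈ T i} => ((p x.1 x.2 : V' i) : M)))) ≤ r := by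
      have h1 := finrank_span_le_card (R := F)
        (Set.range (fun x : {t // t ∈ T i} => ((p x.1 x.2 : V' i) : M)))
      refine le_trans h1 ?_
      rw [Set.toFinset_range]
      refine le_trans (Finset.card_image_le) ?_
      simp only [Finset.card_univ, Fintype.card_coe]
      exact le_trans (Finset.card_le_univ _) (by simp)
    set U : SR := ⟨Submodule.span F
      (Set.range (fun x : {t // t ∈ T i} => ((p x.1 x.2 : V' i) : M))), hdim⟩ with hUdef
    have hgeq : (fun j => ∏ x ∈ (T i).attach, e ((p x.1 x.2 : V' i) : M) j) = gfun U := by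
      funext j
      rw [hedef, hgfundef]
      simp only []
      rw [Finset.prod_boole]
      congr 1
      · apply propext
        constructor
        · intro h
          rw [Submodule.span_le]
          rintro _ ⟨x, rfl⟩
          exact h x (Finset.mem_attach _ x)
        · intro h x _
          exact h (Submodule.subset_span (Set.mem_range_self x))
    have : (fun j => (∏ x ∈ (T i).attach, c x.1 (p x.1 x.2)) *
        (∏ x ∈ (T i).attach, e ((p x.1 x.2 : V' i) : M) j))
        = (∏ x ∈ (T i).attach, c x.1 (p x.1 x.2)) • gfun U := by
      rw [← hgeq]
      funext j
      simp [smul_eq_mul]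
    rw [this]
    exact Submodule.smul_mem _ _ (Submodule.subset_span (Set.mem_range_self U))
  -- conclude
  have hfdP : FiniteDimensional ℚ P := FiniteDimensional.span_of_finite ℚ (Set.finite_range gfun)
  have hcard1 : Fintype.card ι ≤ finrank ℚ P := by
    let f' : ι → P := fun i => ⟨f i, hmem i⟩
    have hind' : LinearIndependent ℚ f' := hind.of_comp P.subtype
    exact hind'.fintype_card_le_finrank
  have hcard2 : finrank ℚ P ≤ Fintype.card SR := by
    refine le_trans (finrank_span_le_card (R := ℚ) (Set.range gfun)) ?_
    rw [Set.toFinset_range]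
    refine le_trans (Finset.card_image_le) (by simp)
  have hcount : (Fintype.card SR : ℚ) ≤ ∑ j ∈ Finset.range (r+1), gaussBinom q (finrank F M) j := by
    haveI : ∀ jj : ℕ, Fintype {U : Submodule F M // finrank F U = jj} := fun _ => Fintype.ofFinite _
    let Φ : SR → Σ jj : Fin (r+1), {X : Submodule F M // finrank F X = (jj:ℕ)} :=
      fun U => ⟨⟨finrank F U.1, by omega⟩, ⟨U.1, rfl⟩⟩
    have hΦ : Function.Injective Φ := by
      have : Function.Injective ((fun y : Σ jj : Fin (r+1),
          {X : Submodule F M // finrank F X = (jj:ℕ)} => y.2.1) ∘ Φ) := by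
        intro a b hab
        exact Subtype.ext hab
      exact this.of_comp
    have h1 : Fintype.card SR ≤ ∑ jj : Fin (r+1),
        Fintype.card {X : Submodule F M // finrank F X = (jj:ℕ)} := by
      rw [← Fintype.card_sigma]
      exact Fintype.card_le_of_injective Φ hΦ
    have h2 : ((∑ jj : Fin (r+1),
        Fintype.card {X : Submodule F M // finrank F X = (jj:ℕ)} : ℕ) : ℚ)
        = ∑ j ∈ Finset.range (r+1), gaussBinom q (finrank F M) j := by
      rw [Nat.cast_sum]
      rw [← Fin.sum_univ_eq_sum_range (fun j => gaussBinom q (finrank F M) j) (r+1)]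
      apply Finset.sum_congr rfl
      intro jj _
      rw [← Nat.card_eq_fintype_card]
      exact card_submodule_eq_gauss (jj : ℕ)
    calc (Fintype.card SR : ℚ) ≤ ((∑ jj : Fin (r+1),
          Fintype.card {X : Submodule F M // finrank F X = (jj:ℕ)} : ℕ) : ℚ) := by
          exact_mod_cast h1
      _ = _ := h2
  calc (Fintype.card ι : ℚ) ≤ (Fintype.card SR : ℚ) := by exact_mod_cast le_trans hcard1 hcard2
    _ ≤ _ := hcount

end QABS

section Helpers

variable {F W : Type*} [Field F] [AddCommGroup W] [Module F W]

lemma exists_submodule_le_finrank_eq [FiniteDimensional F W] (U : Submodule F W) (d : ℕ)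
    (hd : d ≤ finrank F U) : ∃ T : Submodule F W, T ≤ U ∧ finrank F T = d := by
  classical
  let b := finBasis F U
  let v : Fin d → W := fun i => (b (Fin.castLE hd i) : W)
  have hvind : LinearIndependent F v := by
    have h1 : LinearIndependent F (fun i : Fin d => b (Fin.castLE hd i)) :=
      b.linearIndependent.comp _ (Fin.castLE_injective hd)
    exact h1.map' U.subtype (Submodule.ker_subtype _)
  refine ⟨Submodule.span F (Set.range v), ?_, ?_⟩
  · rw [Submodule.span_le]
    rintro _ ⟨i, rfl⟩
    exact (b (Fin.castLE hd i)).2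
  · rw [finrank_span_eq_card hvind, Fintype.card_fin]

lemma finrank_map_mkQ_add [FiniteDimensional F W] (D U : Submodule F W) (h : D ≤ U) :
    finrank F (U.map D.mkQ) + finrank F D = finrank F U := by
  let f : U →ₗ[F] (W ⧸ D) := D.mkQ ∘ₗ U.subtype
  have hrange : LinearMap.range f = U.map D.mkQ := by
    rw [LinearMap.range_comp, Submodule.range_subtype]
  have hker : LinearMap.ker f = Submodule.comap U.subtype D := by
    rw [LinearMap.ker_comp, Submodule.ker_mkQ]
  have hkerrank : finrank F (LinearMap.ker f) = finrank F D := by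
    rw [hker]
    exact LinearEquiv.finrank_eq (Submodule.comapSubtypeEquivOfLe h)
  have := LinearMap.finrank_range_add_finrank_ker f
  rw [hrange, hkerrank] at this
  exact this

lemma map_mkQ_inf [FiniteDimensional F W] (D Vi Vj : Submodule F W) (hi : D ≤ Vi) (hj : D ≤ Vj) :
    (Vi.map D.mkQ) ⊓ (Vj.map D.mkQ) = (Vi ⊓ Vj).map D.mkQ := by
  have hc : Submodule.comap D.mkQ ((Vi.map D.mkQ) ⊓ (Vj.map D.mkQ)) = Vi ⊓ Vj := by
    rw [Submodule.comap_inf, Submodule.comap_map_mkQ, Submodule.comap_map_mkQ,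
      sup_of_le_right hi, sup_of_le_right hj]
  rw [← hc, Submodule.map_comap_eq_self]
  rw [Submodule.range_mkQ]
  exact le_top

end Helpers

section QABSQuotient

variable {F W ι : Type*} [Field F] [Fintype F] [AddCommGroup W] [Module F W]
  [FiniteDimensional F W] [Fintype ι]

theorem qABS_quotient (r : ℕ) (l' : Fin r → ℕ) (V : ι → Submodule F W)
    (hinj : Function.Injective V) (D : Submodule F W) (hD : ∀ i, D ≤ V i)
    (hL : ∀ i j, i ≠ j → ∃ t,
      finrank F (V i ⊓ V j : Submodule F W) = l' t + finrank F D) :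
    (Fintype.card ι : ℚ) ≤ ∑ j ∈ Finset.range (r+1),
      gaussBinom (Fintype.card F) (finrank F W - finrank F D) j := by
  classical
  set V' : ι → Submodule F (W ⧸ D) := fun i => (V i).map D.mkQ with hV'def
  have hinj' : Function.Injective V' := by
    intro i j hij
    apply hinj
    have := congrArg (Submodule.comap D.mkQ) hij
    rwa [hV'def, Submodule.comap_map_mkQ, Submodule.comap_map_mkQ,
      sup_of_le_right (hD i), sup_of_le_right (hD j)] at this
  have hL' : ∀ i j, i ≠ j → ∃ t,
      finrank F (V' i ⊓ V' j : Submodule F (W ⧸ D)) = l' t := by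
    intro i j hij
    obtain ⟨t, ht⟩ := hL i j hij
    refine ⟨t, ?_⟩
    rw [hV'def]
    simp only []
    rw [map_mkQ_inf D (V i) (V j) (hD i) (hD j)]
    have h2 := finrank_map_mkQ_add D (V i ⊓ V j) (le_inf (hD i) (hD j))
    omega
  have hq := qABS r l' V' hinj' hL'
  have hrank : finrank F (W ⧸ D) = finrank F W - finrank F D := by
    have := Submodule.finrank_quotient_add_finrank D
    omega
  rwa [hrank] at hq

end QABSQuotient

section Greedy

variable {F W : Type*} [Field F] [AddCommGroup W] [Module F W] [FiniteDimensional F W]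

lemma greedy_cover {m : ℕ} (V : Fin m → Submodule F W) (k l₀ : ℕ)
    (hk₁ : ∀ j, finrank F (V j) ≤ k)
    (hmeet : ∀ i j : Fin m, i ≠ j → l₀ ≤ finrank F (V i ⊓ V j : Submodule F W))
    (hnotall : finrank F (⨅ i, V i : Submodule F W) < l₀) (i₀ : Fin m) :
    ∃ B : Finset (Fin m), B.Nonempty ∧ finrank F (B.inf V : Submodule F W) < l₀ ∧
      finrank F (B.sup V : Submodule F W) ≤ k + (k - l₀) * (k + 1 - l₀) := by
  classical
  have claim : ∀ d (A : Finset (Fin m)), A.Nonempty → finrank F (A.inf V : Submodule F W) = d →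
      ∃ B, A ⊆ B ∧ B.Nonempty ∧ finrank F (B.inf V : Submodule F W) < l₀ ∧
        finrank F (B.sup V : Submodule F W) ≤ finrank F (A.sup V : Submodule F W) + (k - l₀) * (d + 1 - l₀) := by
    intro d
    induction d using Nat.strong_induction_on with
    | _ d IH =>
      intro A hAne hAd
      by_cases hd : d < l₀
      · exact ⟨A, Finset.Subset.refl A, hAne, hAd ▸ hd, Nat.le_add_right _ _⟩
      · push_neg at hd
        have hnle : ¬ (A.inf V ≤ ⨅ i, V i) := by
          intro hle
          have := Submodule.finrank_mono (M := W) hle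
          omega
        rw [le_iInf_iff] at hnle
        push_neg at hnle
        obtain ⟨j, hj⟩ := hnle
        have hjA : j ∉ A := fun hjm => hj (Finset.inf_le hjm)
        set A' := insert j A with hA'def
        have hsub : A ⊆ A' := Finset.subset_insert j A
        have hinf' : A'.inf V = V j ⊓ A.inf V := Finset.inf_insert
        have hsup' : A'.sup V = V j ⊔ A.sup V := Finset.sup_insert
        have hlt : finrank F (A'.inf V : Submodule F W) < d := by
          have hle : A'.inf V ≤ A.inf V := by
            rw [hinf']; exact inf_le_right
          have h1 : finrank F (A'.inf V : Submodule F W) ≤ d := hAd ▸ Submodule.finrank_mono hle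
          rcases lt_or_eq_of_le h1 with h | h
          · exact h
          · exfalso
            have := Submodule.eq_of_le_of_finrank_le hle (by omega)
            apply hj
            rw [← this, hinf']
            exact inf_le_left
        -- dimension of new sup
        have hsupbound : finrank F (A'.sup V : Submodule F W) ≤ finrank F (A.sup V : Submodule F W) + (k - l₀) := by
          obtain ⟨i1, hi1⟩ := hAne
          have hne : j ≠ i1 := fun h => hjA (h ▸ hi1)
          have hlow : l₀ ≤ finrank F (V j ⊓ A.sup V : Submodule F W) := by
            refine le_trans (hmeet j i1 hne) (Submodule.finrank_mono ?_)
            exact inf_le_inf_left _ (Finset.le_sup hi1)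
          have heq := finrank_sup_add_finrank_inf_eq (V j) (A.sup V)
          have hk := hk₁ j
          rw [hsup']
          omega
        obtain ⟨B, hBsub, hBne, hBinf, hBsup⟩ :=
          IH _ hlt A' (Finset.insert_nonempty j A) rfl
        refine ⟨B, le_trans hsub hBsub, hBne, hBinf, ?_⟩
        have harith : (k - l₀) + (k - l₀) * (finrank F (A'.inf V : Submodule F W) + 1 - l₀)
            ≤ (k - l₀) * (d + 1 - l₀) := by
          have h1 : finrank F (A'.inf V : Submodule F W) + 1 - l₀ ≤ d - l₀ := by omega
          have h2 : (k - l₀) * (finrank F (A'.inf V : Submodule F W) + 1 - l₀) ≤ (k - l₀) * (d - l₀) :=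
            Nat.mul_le_mul_left _ h1
          have h4 : d - l₀ + 1 = d + 1 - l₀ := by omega
          have h3 : (k - l₀) + (k - l₀) * (d - l₀) = (k - l₀) * (d + 1 - l₀) := by
            rw [← h4]; ring
          omega
        omega
  have hd0 : finrank F (({i₀} : Finset (Fin m)).inf V : Submodule F W) = finrank F (V i₀) := by
    rw [Finset.inf_singleton]
  obtain ⟨B, _, hBne, hBinf, hBsup⟩ :=
    claim (finrank F (V i₀)) {i₀} (Finset.singleton_nonempty i₀) hd0
  refine ⟨B, hBne, hBinf, ?_⟩
  have hsup0 : ({i₀} : Finset (Fin m)).sup V = V i₀ := Finset.sup_singleton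
  rw [hsup0] at hBsup
  have hk0 := hk₁ i₀
  have hmono : (k - l₀) * (finrank F (V i₀) + 1 - l₀) ≤ (k - l₀) * (k + 1 - l₀) :=
    Nat.mul_le_mul_left _ (by omega)
  omega

end Greedy

/-- **Theorem 1.15.** Let `ℒ = {l 0 < ⋯ < l (s-1)}` be a set of `s` nonnegative
integers and `𝔽_q` a finite field of order `q` (a prime power). Suppose
`V 1, …, V m` are pairwise distinct subspaces of an `n`-dimensional vector space
over `𝔽_q` whose pairwise intersections have dimension in `ℒ`, with maximum
dimension `k`. If `q^(n-l₁) - 1 ≥ (q^s - 1)·[k² choose l₁+1]_q`, then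
`m ≤ [n-l₁ choose s]_q + [n-l₁ choose s-1]_q + ⋯ + [n-l₁ choose 0]_q`. -/
theorem stmt_13 (q n s m : ℕ) (hs : 0 < s)
    (l : Fin s → ℕ) (hl : StrictMono l)
    (F : Type*) [Field F] [Fintype F] (hq : Fintype.card F = q)
    (W : Type*) [AddCommGroup W] [Module F W] [FiniteDimensional F W]
    (hn : Module.finrank F W = n)
    (V : Fin m → Submodule F W) (hV : Function.Injective V)
    (hVL : ∀ i j, i ≠ j → ∃ t, Module.finrank F (V i ⊓ V j : Submodule F W) = l t)
    (k : ℕ) (hk₁ : ∀ j, Module.finrank F (V j) ≤ k)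
    (hk₂ : ∃ j, Module.finrank F (V j) = k)
    (hbig : (q : ℚ) ^ (n - l ⟨0, hs⟩) - 1 ≥
      ((q : ℚ) ^ s - 1) * gaussBinom q (k ^ 2) (l ⟨0, hs⟩ + 1)) :
    (m : ℚ) ≤ ∑ j ∈ Finset.range (s + 1), gaussBinom q (n - l ⟨0, hs⟩) j := by
  classical
  subst hq
  subst hn
  set q := Fintype.card F with hqdef
  set n := finrank F W with hndef
  set l₀ := l ⟨0, hs⟩ with hl₀def
  have hq2 : 2 ≤ q := Fintype.one_lt_card
  have h1q : (1:ℚ) < (q:ℚ) := by exact_mod_cast hq2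
  have hRHS1 : 1 ≤ ∑ j ∈ Finset.range (s+1), gaussBinom q (n - l₀) j := by
    rw [Finset.sum_range_succ']
    have h0 : gaussBinom q (n - l₀) 0 = 1 := GB.zero_right _ _
    have hnn : 0 ≤ ∑ i ∈ Finset.range s, gaussBinom q (n - l₀) (i+1) :=
      Finset.sum_nonneg fun i _ => GB.nonneg hq2
    rw [h0]
    linarith
  by_cases hm2 : m ≤ 1
  · calc (m:ℚ) ≤ 1 := by exact_mod_cast hm2
      _ ≤ _ := hRHS1
  · push_neg at hm2
    have hmeet : ∀ i j : Fin m, i ≠ j → l₀ ≤ finrank F (V i ⊓ V j : Submodule F W) := by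
      intro i j hij
      obtain ⟨t, ht⟩ := hVL i j hij
      rw [ht]
      exact hl.monotone (by simp [Fin.le_def])
    set D := (⨅ i, V i : Submodule F W) with hDdef
    by_cases hcase : l₀ ≤ finrank F D
    · -- Case 1 : common subspace of dimension ≥ l₀
      have hDle : ∀ i, D ≤ V i := fun i => iInf_le V i
      have hL' : ∀ i j : Fin m, i ≠ j → ∃ t : Fin s,
          finrank F (V i ⊓ V j : Submodule F W) = (l t - finrank F D) + finrank F D := by
        intro i j hij
        obtain ⟨t, ht⟩ := hVL i j hij
        refine ⟨t, ?_⟩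
        have h1 : finrank F D ≤ finrank F (V i ⊓ V j : Submodule F W) :=
          Submodule.finrank_mono (le_inf (hDle i) (hDle j))
        omega
      have hqq := qABS_quotient s (fun t => l t - finrank F D) V hV D hDle hL'
      rw [Fintype.card_fin] at hqq
      refine le_trans hqq (Finset.sum_le_sum fun j _ => GB.mono_left hq2 (by omega))
    · -- Case 2 : no common subspace
      push_neg at hcase
      have hdim1 : ∀ i, l₀ + 1 ≤ finrank F (V i) := by
        intro i
        have hex : ∃ j : Fin m, j ≠ i := by
          by_cases h0 : i = ⟨0, by omega⟩
          · exact ⟨⟨1, by omega⟩, by rw [h0]; intro hcon; simp [Fin.ext_iff] at hcon⟩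
          · exact ⟨⟨0, by omega⟩, fun hcon => h0 (hcon ▸ rfl)⟩
        obtain ⟨j, hj⟩ := hex
        have h1 : l₀ ≤ finrank F (V i ⊓ V j : Submodule F W) :=
          hmeet i j (fun h => hj h.symm)
        have h2 : finrank F (V i ⊓ V j : Submodule F W) ≤ finrank F (V i) :=
          Submodule.finrank_mono inf_le_left
        by_contra hcon
        push_neg at hcon
        have hle : ∀ j', V i ≤ V j' := by
          intro j'
          by_cases hj' : j' = i
          · rw [hj']
          · have ha := hmeet i j' (fun h => hj' h.symm)
            have hb : finrank F (V i ⊓ V j' : Submodule F W) ≤ finrank F (V i) :=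
              Submodule.finrank_mono inf_le_left
            have heq : (V i ⊓ V j' : Submodule F W) = V i :=
              Submodule.eq_of_le_of_finrank_le inf_le_left (by omega)
            rw [← heq]
            exact inf_le_right
        have hVD : V i ≤ D := le_iInf hle
        have := Submodule.finrank_mono (M := W) hVD
        omega
      have hkl : l₀ + 1 ≤ k := by
        obtain ⟨j, hjk⟩ := hk₂
        rw [← hjk]
        exact hdim1 j
      obtain ⟨B, hBne, hBinf, hBsup⟩ :=
        greedy_cover V k l₀ hk₁ hmeet hcase ⟨0, by omega⟩
      set Z := (B.sup V : Submodule F W) with hZdef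
      have hZk : finrank F Z ≤ k^2 := by
        have h1 : k - l₀ ≤ k - 1 := by omega
        have h2 : k + 1 - l₀ ≤ k := by omega
        have h3 : (k - l₀) * (k + 1 - l₀) ≤ (k-1) * k := Nat.mul_le_mul h1 h2
        have h4 : k + (k-1) * k = k^2 := by
          cases k with
          | zero => omega
          | succ k' => simp [Nat.succ_sub_one]; ring
        omega
      have hmeetZ : ∀ j, l₀ + 1 ≤ finrank F (V j ⊓ Z : Submodule F W) := by
        intro j
        by_cases hjB : j ∈ B
        · have h1 : V j ≤ Z := Finset.le_sup hjB
          have heq : (V j ⊓ Z : Submodule F W) = V j := inf_eq_left.mpr h1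
          rw [heq]
          exact hdim1 j
        · by_contra hcon
          push_neg at hcon
          have hsubZ : ∀ i ∈ B, (V j ⊓ Z : Submodule F W) ≤ V i := by
            intro i hiB
            have hne : j ≠ i := fun h => hjB (h ▸ hiB)
            have ha := hmeet j i hne
            have hb : (V j ⊓ V i : Submodule F W) ≤ (V j ⊓ Z : Submodule F W) :=
              inf_le_inf_left _ (Finset.le_sup hiB)
            have hc2 : finrank F (V j ⊓ Z : Submodule F W)
                ≤ finrank F (V j ⊓ V i : Submodule F W) := by omega
            have heq : (V j ⊓ V i : Submodule F W) = (V j ⊓ Z : Submodule F W) :=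
              Submodule.eq_of_le_of_finrank_le hb hc2
            rw [← heq]
            exact inf_le_right
          have hsub2 : (V j ⊓ Z : Submodule F W) ≤ B.inf V := Finset.le_inf hsubZ
          have hd2 := Submodule.finrank_mono (M := W) hsub2
          obtain ⟨i1, hi1⟩ := hBne
          have hne1 : j ≠ i1 := fun h => hjB (h ▸ hi1)
          have hle1 : V i1 ≤ Z := Finset.le_sup hi1
          have hd3 : l₀ ≤ finrank F (V j ⊓ Z : Submodule F W) :=
            le_trans (hmeet j i1 hne1)
              (Submodule.finrank_mono (inf_le_inf_left _ hle1))
          omega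
      have hTj : ∀ j : Fin m, ∃ T : Submodule F W,
          T ≤ Z ∧ finrank F T = l₀+1 ∧ T ≤ V j := by
        intro j
        obtain ⟨T, hT1, hT2⟩ :=
          exists_submodule_le_finrank_eq (V j ⊓ Z : Submodule F W) (l₀+1) (hmeetZ j)
        exact ⟨T, le_trans hT1 inf_le_right, hT2, le_trans hT1 inf_le_left⟩
      choose Tsel hTZ hTrank hTle using hTj
      have hfw : Finite W := Module.finite_of_finite F
      have hfsub : Finite (Submodule F W) :=
        Finite.of_injective (fun U => (U : Set W)) SetLike.coe_injective
      set SubT := {T : Submodule F W // T ≤ Z ∧ finrank F T = l₀ + 1} with hSubTdef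
      haveI : Fintype SubT := Fintype.ofFinite _
      haveI : ∀ T : SubT, Fintype {j : Fin m // T.1 ≤ V j} := fun T => Fintype.ofFinite _
      have hcover : m ≤ ∑ T : SubT, Fintype.card {j : Fin m // T.1 ≤ V j} := by
        let Φ : Fin m → Σ T : SubT, {j : Fin m // T.1 ≤ V j} :=
          fun j => ⟨⟨Tsel j, hTZ j, hTrank j⟩, ⟨j, hTle j⟩⟩
        have hΦ : Function.Injective Φ := by
          have h2 : Function.Injective
              ((fun y : Σ T : SubT, {j : Fin m // T.1 ≤ V j} => y.2.1) ∘ Φ) :=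
            fun a b hab => hab
          exact h2.of_comp
        calc m = Fintype.card (Fin m) := (Fintype.card_fin m).symm
          _ ≤ Fintype.card (Σ T : SubT, {j : Fin m // T.1 ≤ V j}) :=
              Fintype.card_le_of_injective Φ hΦ
          _ = ∑ T : SubT, Fintype.card {j : Fin m // T.1 ≤ V j} := Fintype.card_sigma
      have hfiber : ∀ T : SubT, (Fintype.card {j : Fin m // T.1 ≤ V j} : ℚ)
          ≤ ∑ j ∈ Finset.range s, gaussBinom q (n - (l₀+1)) j := by
        intro T
        set V2 : {j : Fin m // T.1 ≤ V j} → Submodule F W := fun j => V j.1 with hV2def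
        have hinj2 : Function.Injective V2 := fun a b hab => Subtype.ext (hV hab)
        have hL2 : ∀ a b : {j : Fin m // T.1 ≤ V j}, a ≠ b → ∃ t : Fin (s-1),
            finrank F (V2 a ⊓ V2 b : Submodule F W)
              = (l ⟨t.1+1, by omega⟩ - (l₀+1)) + finrank F T.1 := by
          intro a b hab
          have hne : a.1 ≠ b.1 := fun h => hab (Subtype.ext h)
          obtain ⟨t, ht⟩ := hVL a.1 b.1 hne
          have hTsub : T.1 ≤ (V2 a ⊓ V2 b : Submodule F W) := le_inf a.2 b.2
          have hge : l₀ + 1 ≤ finrank F (V2 a ⊓ V2 b : Submodule F W) :=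
            T.2.2 ▸ Submodule.finrank_mono hTsub
          have ht' : finrank F (V2 a ⊓ V2 b : Submodule F W) = l t := ht
          have ht1 : 1 ≤ t.1 := by
            by_contra h0
            have ht0 : t = ⟨0, hs⟩ := by
              apply Fin.ext
              show t.1 = 0
              omega
            rw [ht0] at ht'
            omega
          refine ⟨⟨t.1 - 1, by omega⟩, ?_⟩
          have hidx : (⟨t.1 - 1 + 1, by omega⟩ : Fin s) = t := by
            apply Fin.ext
            show t.1 - 1 + 1 = t.1
            omega
          rw [hidx, ht', T.2.2]
          have hlt2 : l₀ + 1 ≤ l t := by omega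
          omega
        have hqq := qABS_quotient (s-1)
          (fun u => l ⟨u.1+1, by omega⟩ - (l₀+1)) V2 hinj2 T.1 (fun j => j.2) hL2
        have hs1 : s - 1 + 1 = s := by omega
        rw [hs1, T.2.2] at hqq
        exact hqq
      -- assemble in ℚ
      set X : ℚ := (q:ℚ)^(n - l₀) - 1 with hXdef
      have hXnn : 0 ≤ X := by
        have : (1:ℚ) ≤ (q:ℚ)^(n-l₀) := one_le_pow₀ (le_of_lt h1q)
        rw [hXdef]; linarith
      have hden_s : (0:ℚ) < (q:ℚ)^s - 1 := by
        have : (1:ℚ) < (q:ℚ)^s := one_lt_pow₀ h1q (by omega)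
        linarith
      have hSnn : 0 ≤ ∑ j ∈ Finset.range s, gaussBinom q (n - (l₀+1)) j :=
        Finset.sum_nonneg fun j _ => GB.nonneg hq2
      have hSubTcard : (Fintype.card SubT : ℚ) ≤ gaussBinom q (k^2) (l₀+1) := by
        haveI : Fintype {U : Submodule F Z // finrank F U = l₀+1} := Fintype.ofFinite _
        have hequiv : SubT ≃ {U : Submodule F Z // finrank F U = l₀+1} :=
          { toFun := fun T => ⟨Submodule.comap Z.subtype T.1, by
              rw [LinearEquiv.finrank_eq (Submodule.comapSubtypeEquivOfLe T.2.1)]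
              exact T.2.2⟩
            invFun := fun U => ⟨Submodule.map Z.subtype U.1,
              ⟨Submodule.map_subtype_le _ _, by
                rw [Submodule.finrank_map_subtype_eq]; exact U.2⟩⟩
            left_inv := fun T => by
              apply Subtype.ext
              show Submodule.map Z.subtype (Submodule.comap Z.subtype T.1) = T.1
              rw [Submodule.map_comap_subtype]
              exact inf_eq_right.mpr T.2.1
            right_inv := fun U => by
              apply Subtype.ext
              show Submodule.comap Z.subtype (Submodule.map Z.subtype U.1) = U.1
              rw [Submodule.comap_map_eq, Submodule.ker_subtype, sup_bot_eq] }
        rw [Fintype.card_congr hequiv]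
        have hc := card_submodule_eq_gauss (F := F) (M := Z) (l₀+1)
        rw [Nat.card_eq_fintype_card] at hc
        rw [hc]
        exact GB.mono_left hq2 hZk
      have hgT : gaussBinom q (k^2) (l₀+1) ≤ X / ((q:ℚ)^s - 1) := by
        rw [le_div_iff₀ hden_s]
        calc gaussBinom q (k^2) (l₀+1) * ((q:ℚ)^s - 1)
            = ((q:ℚ)^s - 1) * gaussBinom q (k^2) (l₀+1) := by ring
          _ ≤ X := hbig
      have hterm : ∀ j ∈ Finset.range s,
          X / ((q:ℚ)^s - 1) * gaussBinom q (n - (l₀+1)) j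
            ≤ gaussBinom q (n - l₀) (j+1) := by
        intro j hj
        have hjs : j + 1 ≤ s := by
          have := Finset.mem_range.mp hj
          omega
        rw [GB.succ]
        have hidx : n - l₀ - 1 = n - (l₀+1) := by omega
        rw [hidx]
        have hden_j : (0:ℚ) < (q:ℚ)^(j+1) - 1 := by
          have : (1:ℚ) < (q:ℚ)^(j+1) := one_lt_pow₀ h1q (by omega)
          linarith
        have hfrac : X / ((q:ℚ)^s - 1) ≤ X / ((q:ℚ)^(j+1) - 1) := by
          apply div_le_div_of_nonneg_left hXnn hden_j
          have : (q:ℚ)^(j+1) ≤ (q:ℚ)^s := pow_le_pow_right₀ (le_of_lt h1q) hjs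
          linarith
        have hG : 0 ≤ gaussBinom q (n - (l₀+1)) j := GB.nonneg hq2
        calc X / ((q:ℚ)^s - 1) * gaussBinom q (n - (l₀+1)) j
            ≤ X / ((q:ℚ)^(j+1) - 1) * gaussBinom q (n - (l₀+1)) j :=
              mul_le_mul_of_nonneg_right hfrac hG
          _ = gaussBinom q (n - (l₀+1)) j * (((q:ℚ)^(n-l₀) - 1) / ((q:ℚ)^(j+1) - 1)) := by
              rw [hXdef]; ring
      calc (m:ℚ) ≤ ∑ T : SubT, (Fintype.card {j : Fin m // T.1 ≤ V j} : ℚ) := by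
            exact_mod_cast hcover
        _ ≤ ∑ _T : SubT, ∑ j ∈ Finset.range s, gaussBinom q (n - (l₀+1)) j :=
            Finset.sum_le_sum fun T _ => hfiber T
        _ = (Fintype.card SubT : ℚ) * ∑ j ∈ Finset.range s, gaussBinom q (n - (l₀+1)) j := by
            rw [Finset.sum_const, Finset.card_univ, nsmul_eq_mul]
        _ ≤ (X / ((q:ℚ)^s - 1)) * ∑ j ∈ Finset.range s, gaussBinom q (n - (l₀+1)) j := by
            apply mul_le_mul_of_nonneg_right _ hSnn
            exact le_trans hSubTcard hgT
        _ = ∑ j ∈ Finset.range s, X / ((q:ℚ)^s - 1) * gaussBinom q (n - (l₀+1)) j := by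
            rw [Finset.mul_sum]
        _ ≤ ∑ j ∈ Finset.range s, gaussBinom q (n - l₀) (j+1) :=
            Finset.sum_le_sum hterm
        _ ≤ ∑ j ∈ Finset.range (s+1), gaussBinom q (n - l₀) j := by
            rw [Finset.sum_range_succ']
            have h0 : gaussBinom q (n - l₀) 0 = 1 := GB.zero_right _ _
            rw [h0]
            linarith
end

section
/- Let ℒ = {l₁, l₂, …, l_s} be a set of s nonnegative integers and K = {k₁, k₂, …, k_r} be a set of integers satisfying kᵢ > s − r for every i. Suppose 𝒜 = {A₁, A₂, …, A_m} is a family of m pairwise distinct subsets of [n] such that |Aᵢ| ∈ K for every 1 ≤ i ≤ m and |Aᵢ ∩ Aⱼ| ∈ ℒ for every pair i ≠ j. Then m ≤ C(n, s) + C(n, s−1) + … + C(n, s−r+1), where terms C(n, i) with i < 0 are interpreted as 0. -/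
/-!
The polynomial method, with functions on `Finset α` in place of multilinear polynomials. To each
`A i` attach `f_i(S) = ∏_{l ∈ L, l < |A i|} (|A i ∩ S| - l)` and to each `D` with `|D| ≤ s - r`
attach `g_D(S) = x^D(S) ∏_{k ∈ K} (|S| - k)`. All of them have degree at most `s`, so they lie in
a space of dimension `∑_{j ≤ s} C(n, j)`. Evaluated at the `A i` by increasing size and then at the
`D` by increasing size, the family is triangular (`g_D` vanishes at every `A i` since `|A i| ∈ K`),
hence linearly independent, and `m + ∑_{j ≤ s - r} C(n, j) ≤ ∑_{j ≤ s} C(n, j)`.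
-/

open Finset

namespace AlonBabaiSuzuki

theorem linearIndependent_of_eval_triangular {ι X β R : Type*} [CommRing R] [NoZeroDivisors R]
    [Preorder β] [WellFoundedLT β] (F : ι → X → R) (x : ι → X) (rank : ι → β)
    (hdiag : ∀ i, F i (x i) ≠ 0) (htri : ∀ i j, j ≠ i → F j (x i) ≠ 0 → rank j < rank i) :
    LinearIndependent R F := by
  rw [linearIndependent_iff']
  intro s c hc i
  induction i using (InvImage.wf rank wellFounded_lt).induction with
  | _ i ih =>
    intro hi
    have hval := congrFun hc (x i)
    simp only [Finset.sum_apply, Pi.smul_apply, smul_eq_mul, Pi.zero_apply] at hval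
    rw [Finset.sum_eq_single_of_mem i hi] at hval
    · exact (mul_eq_zero.mp hval).resolve_right (hdiag i)
    · intro j hj hji
      by_cases h : F j (x i) = 0
      · rw [h, mul_zero]
      · rw [ih j (htri i j hji h) hj, zero_mul]

variable {α : Type*}

noncomputable def sizePolynomial (K : Finset ℤ) (S : Finset α) : ℝ :=
  ∏ k ∈ K, ((#S : ℝ) - k)

theorem sizePolynomial_eq_zero_iff {K : Finset ℤ} {S : Finset α} :
    sizePolynomial K S = 0 ↔ (#S : ℤ) ∈ K := by
  simp only [sizePolynomial, prod_eq_zero_iff, sub_eq_zero]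
  constructor
  · rintro ⟨k, hk, h⟩
    rwa [show (#S : ℤ) = k by exact_mod_cast h]
  · exact fun h => ⟨_, h, by push_cast; rfl⟩

theorem card_filter_card_lt [Fintype α] (t : ℕ) :
    #{T : Finset α | #T < t} = ∑ j ∈ range t, (Fintype.card α).choose j := by
  rw [card_eq_sum_card_fiberwise (f := card) (t := range t) (fun T hT => by simpa using hT)]
  refine sum_congr rfl fun j hj => ?_
  rw [← card_univ, ← card_powersetCard, powersetCard_eq_filter, powerset_univ, filter_filter]
  congr 1
  ext T
  simp only [mem_filter, mem_univ, true_and, mem_range] at hj ⊢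
  exact ⟨And.right, fun h => ⟨h ▸ hj, h⟩⟩

variable [DecidableEq α]

/-- The monomial `x^T` evaluated at the characteristic vector of `S`. -/
noncomputable def monomial (T S : Finset α) : ℝ := if T ⊆ S then 1 else 0

variable (α) in
noncomputable def lowDegree (d : ℕ) : Submodule ℝ (Finset α → ℝ) :=
  Submodule.span ℝ (monomial '' {T | #T ≤ d})

theorem monomial_mul (T T' : Finset α) : monomial T * monomial T' = monomial (T ∪ T') := by
  funext S
  by_cases h : T ⊆ S <;> by_cases h' : T' ⊆ S <;> simp [monomial, union_subset_iff, h, h']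

theorem monomial_empty : monomial (∅ : Finset α) = 1 := by
  funext S
  simp [monomial]

theorem monomial_mem_lowDegree {T : Finset α} {d : ℕ} (h : #T ≤ d) :
    monomial T ∈ lowDegree α d :=
  Submodule.subset_span ⟨T, h, rfl⟩

theorem lowDegree_mono : Monotone (lowDegree α) := fun _ _ h =>
  Submodule.span_mono (Set.image_mono fun _ hT => le_trans hT h)

theorem lowDegree_mul_le (a b : ℕ) : lowDegree α a * lowDegree α b ≤ lowDegree α (a + b) := by
  rw [lowDegree, lowDegree, Submodule.span_mul_span, Submodule.span_le]
  rintro _ ⟨_, ⟨T, hT, rfl⟩, _, ⟨T', hT', rfl⟩, rfl⟩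
  show monomial T * monomial T' ∈ _
  rw [monomial_mul]
  exact monomial_mem_lowDegree ((card_union_le _ _).trans (add_le_add hT hT'))

theorem prod_mem_lowDegree {ι : Type*} (t : Finset ι) (v : ι → Finset α → ℝ)
    (hv : ∀ i ∈ t, v i ∈ lowDegree α 1) : ∏ i ∈ t, v i ∈ lowDegree α #t := by
  classical
  induction t using Finset.induction_on with
  | empty =>
    rw [prod_empty, card_empty, ← monomial_empty]
    exact monomial_mem_lowDegree le_rfl
  | insert a t ha ih =>
    rw [prod_insert ha, card_insert_of_notMem ha, add_comm]
    exact lowDegree_mul_le 1 #t (Submodule.mul_mem_mul (hv a (mem_insert_self a t))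
      (ih fun i hi => hv i (mem_insert_of_mem hi)))

theorem card_inter_sub_mem_lowDegree (A : Finset α) (c : ℝ) :
    (fun S => (#(A ∩ S) : ℝ) - c) ∈ lowDegree α 1 := by
  have h : (fun S => (#(A ∩ S) : ℝ) - c) = ∑ j ∈ A, monomial {j} - c • monomial ∅ := by
    funext S
    simp [monomial]
  rw [h]
  exact Submodule.sub_mem _ (Submodule.sum_mem _ fun j _ => monomial_mem_lowDegree (by simp))
    (Submodule.smul_mem _ c (monomial_mem_lowDegree (by simp)))

noncomputable def intersectionPolynomial (L : Finset ℕ) (A S : Finset α) : ℝ :=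
  ∏ l ∈ L with l < #A, ((#(A ∩ S) : ℝ) - l)

theorem intersectionPolynomial_mem_lowDegree (L : Finset ℕ) (A : Finset α) :
    intersectionPolynomial L A ∈ lowDegree α #L := by
  have h := prod_mem_lowDegree {l ∈ L | l < #A} _
    fun l _ => card_inter_sub_mem_lowDegree A (l : ℝ)
  rw [prod_fn] at h
  exact lowDegree_mono (card_filter_le _ _) h

theorem sizePolynomial_mem_lowDegree [Fintype α] (K : Finset ℤ) :
    sizePolynomial K ∈ lowDegree α #K := by
  have h := prod_mem_lowDegree K _
    fun k _ => card_inter_sub_mem_lowDegree (univ : Finset α) (k : ℝ)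
  simp only [prod_fn, univ_inter] at h
  exact h

theorem intersectionPolynomial_self_ne_zero (L : Finset ℕ) (A : Finset α) :
    intersectionPolynomial L A A ≠ 0 := by
  rw [intersectionPolynomial, inter_self, prod_ne_zero_iff]
  intro l hl
  rw [sub_ne_zero]
  exact_mod_cast (mem_filter.mp hl).2.ne'

theorem intersectionPolynomial_eq_zero_of_card_le {L : Finset ℕ} {A B : Finset α} (hne : A ≠ B)
    (hL : #(A ∩ B) ∈ L) (hle : #B ≤ #A) : intersectionPolynomial L A B = 0 := by
  have hlt : #(A ∩ B) < #A := by
    refine (card_le_card inter_subset_left).lt_of_ne fun heq => hne ?_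
    have hsub : A ⊆ B := inter_eq_left.mp (eq_of_subset_of_card_le inter_subset_left heq.ge)
    exact eq_of_subset_of_card_le hsub hle
  exact prod_eq_zero (mem_filter.mpr ⟨hL, hlt⟩) (sub_self _)

theorem linearIndependent_intersectionPolynomial_sumElim {ι : Type*} (L : Finset ℕ) (K : Finset ℤ)
    (A : ι → Finset α) (hA : Function.Injective A) (hAK : ∀ i, (#(A i) : ℤ) ∈ K)
    (hAL : ∀ i j, i ≠ j → #(A i ∩ A j) ∈ L)
    (𝒟 : Finset (Finset α)) (h𝒟 : ∀ D ∈ 𝒟, (#D : ℤ) ∉ K) :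
    LinearIndependent ℝ (Sum.elim (fun i => intersectionPolynomial L (A i))
      (fun D : 𝒟 => monomial (D : Finset α) * sizePolynomial K)) := by
  refine linearIndependent_of_eval_triangular _ (Sum.elim A Subtype.val)
    (Sum.elim (fun i => toLex (0, #(A i))) (fun D => toLex (1, #(D : Finset α)))) ?_ ?_
  · rintro (i | D)
    · exact intersectionPolynomial_self_ne_zero L (A i)
    · simpa [monomial, sizePolynomial_eq_zero_iff] using h𝒟 D D.2
  · rintro (i | D) (j | D') hne hF <;>
      simp only [ne_eq, Sum.inl.injEq, Sum.inr.injEq, Sum.elim_inl, Sum.elim_inr,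
        Pi.mul_apply, Prod.Lex.toLex_lt_toLex] at hne hF ⊢
    · exact Or.inr ⟨trivial, lt_of_not_ge fun hle =>
        hF (intersectionPolynomial_eq_zero_of_card_le (hA.ne hne) (hAL j i hne) hle)⟩
    · exact absurd (by rw [sizePolynomial_eq_zero_iff.mpr (hAK i), mul_zero]) hF
    · exact Or.inl zero_lt_one
    · refine Or.inr ⟨trivial, card_lt_card (Finset.ssubset_iff_subset_ne.mpr
        ⟨?_, fun h => hne (Subtype.ext h)⟩)⟩
      by_contra hsub
      exact hF (by rw [monomial, if_neg hsub, zero_mul])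

theorem finrank_lowDegree_le [Fintype α] (d : ℕ) :
    Module.finrank ℝ (lowDegree α d) ≤ ∑ j ∈ range (d + 1), (Fintype.card α).choose j := by
  have h : lowDegree α d =
      Submodule.span ℝ ↑(image monomial ({T : Finset α | #T ≤ d} : Finset (Finset α))) := by
    rw [lowDegree, coe_image, coe_filter]
    simp
  rw [h]
  refine (finrank_span_finset_le_card _).trans (card_image_le.trans_eq ?_)
  simpa only [Nat.lt_succ_iff] using card_filter_card_lt (α := α) (d + 1)

theorem card_add_card_le_sum_choose [Fintype α] {ι : Type*} [Fintype ι] (L : Finset ℕ)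
    (K : Finset ℤ) (A : ι → Finset α) (hA : Function.Injective A)
    (hAK : ∀ i, (#(A i) : ℤ) ∈ K) (hAL : ∀ i j, i ≠ j → #(A i ∩ A j) ∈ L)
    (𝒟 : Finset (Finset α)) (h𝒟K : ∀ D ∈ 𝒟, (#D : ℤ) ∉ K) (h𝒟L : ∀ D ∈ 𝒟, #D + #K ≤ #L) :
    Fintype.card ι + #𝒟 ≤ ∑ j ∈ range (#L + 1), (Fintype.card α).choose j := by
  have hind := linearIndependent_intersectionPolynomial_sumElim L K A hA hAK hAL 𝒟 h𝒟K
  have hspan : Submodule.span ℝ (Set.range (Sum.elim (fun i => intersectionPolynomial L (A i))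
      (fun D : 𝒟 => monomial (D : Finset α) * sizePolynomial K))) ≤ lowDegree α #L := by
    rw [Submodule.span_le]
    rintro _ ⟨i | D, rfl⟩
    · exact intersectionPolynomial_mem_lowDegree L (A i)
    · exact lowDegree_mono (h𝒟L D D.2) (lowDegree_mul_le _ _ (Submodule.mul_mem_mul
        (monomial_mem_lowDegree le_rfl) (sizePolynomial_mem_lowDegree K)))
  have : Module.Finite ℝ (lowDegree α #L) :=
    Module.Finite.span_of_finite ℝ ((Set.toFinite _).image _)
  calc Fintype.card ι + #𝒟 = Fintype.card (ι ⊕ 𝒟) := by simp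
    _ = Module.finrank ℝ _ := (finrank_span_eq_card hind).symm
    _ ≤ Module.finrank ℝ (lowDegree α #L) := Submodule.finrank_mono hspan
    _ ≤ _ := finrank_lowDegree_le _

end AlonBabaiSuzuki

open AlonBabaiSuzuki in
/-- **Theorem 1.4 (Alon–Babai–Suzuki).** Let `ℒ` be a set of `s` nonnegative integers
and `K = {k 1, …, k r}` a set of integers with each element greater than `s - r`.
If `A 1, …, A m` are pairwise distinct subsets of `[n]` with `|A i| ∈ K` for every `i`
and `|A i ∩ A j| ∈ ℒ` for all `i ≠ j`, then
`m ≤ C(n, s) + C(n, s-1) + ⋯ + C(n, s-r+1)`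
(terms with negative lower index being `0`). -/
theorem stmt_16 (n s r m : ℕ) (L : Finset ℕ) (hL : L.card = s)
    (K : Finset ℤ) (hKcard : K.card = r)
    (hKgt : ∀ x ∈ K, x > (s : ℤ) - (r : ℤ))
    (A : Fin m → Finset (Fin n)) (hA : Function.Injective A)
    (hAK : ∀ i, ((A i).card : ℤ) ∈ K)
    (hAL : ∀ i j, i ≠ j → (A i ∩ A j).card ∈ L) :
    m ≤ ∑ j ∈ Finset.Icc (s + 1 - r) s, n.choose j := by
  subst hL hKcard
  have hbound := card_add_card_le_sum_choose L K A hA hAK hAL {D | #D < #L + 1 - #K}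
    (fun D hD hDK => by have := hKgt _ hDK; rw [mem_filter] at hD; omega)
    (fun D hD => by rw [mem_filter] at hD; omega)
  have hsplit := sum_range_add_sum_Ico (n.choose ·) (Nat.sub_le (#L + 1) #K)
  rw [Ico_add_one_right_eq_Icc] at hsplit
  rw [Fintype.card_fin, Fintype.card_fin, card_filter_card_lt, Fintype.card_fin] at hbound
  omega
end

section
/- Let ℒ = {l₁, l₂, …, l_s} be a set of s positive integers. If 𝒜 is an ℒ-intersecting family of pairwise distinct subsets of [n], then |𝒜| ≤ C(n−1, s) + C(n−1, s−1) + … + C(n−1, 0). -/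
/-!
Fix a point `e` and attach to `A ∈ 𝒜` the function of `Y ⊆ [n]`
`F_A(Y) = ∏_{l ∈ L, l < |A|} (|A ∩ (Y ∪ {e})| - l)` if `e ∈ A`, and
`F_A(Y) = ∏_{l ∈ L, l ≤ |A|} (|A ∩ Y| - l)` if `e ∉ A`.
None of them depends on whether `e ∈ Y`, so all are multilinear polynomials of degree `≤ s` in the
`n - 1` indicator variables of `[n] \ {e}`, a space of dimension `∑_{j ≤ s} C(n-1, j)`; it remains
to show that they are linearly independent.

Take a relation `∑ g_A F_A = 0`. Evaluating it at the members `C ∋ e` of `𝒜`, by increasing size,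
kills their coefficients, because the `F_A` with `e ∉ A` vanish at every other member of `𝒜`.
Those `F_A` vanish at `A` too when `|A| ∈ L`, so the rest needs another argument. Let `T` have
maximal size `k` among the sets with `g_T ≠ 0`. If `k ∉ L`, evaluate at `T`. If `k ∈ L`, the
`D`-th finite difference over the subsets of a set `X` of size `D = |L ∩ [1, k]|` only sees the
sets of size `k`, and gives `∑_{|B| = k, X ⊆ B} g_B = 0`. As `D ≤ k`, double counting pushes this
down to all `|X| ≤ D`, and pairing with `∏_{l ∈ L, l < k} (|T ∩ Y| - l)`, of degree `< D`,
isolates `g_T`.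
-/

open Finset Polynomial fwdDiff

namespace Snevily

variable {α : Type*}

def lowSets (S : Finset α) (d : ℕ) : Finset (Finset α) := S.powerset.filter (#· ≤ d)

lemma mem_lowSets {S X : Finset α} {d : ℕ} : X ∈ lowSets S d ↔ X ⊆ S ∧ #X ≤ d := by
  simp [lowSets]

lemma card_lowSets_le (S : Finset α) (d : ℕ) :
    #(lowSets S d) ≤ ∑ j ∈ range (d + 1), (#S).choose j := by
  classical
  have h : lowSets S d = (range (d + 1)).biUnion fun j => powersetCard j S := by
    ext X
    simp only [mem_lowSets, mem_biUnion, mem_range, mem_powersetCard]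
    constructor
    · rintro ⟨hXS, hX⟩
      exact ⟨#X, by omega, hXS, rfl⟩
    · rintro ⟨j, hj, hXS, rfl⟩
      exact ⟨hXS, by omega⟩
  rw [h]
  exact card_biUnion_le.trans (sum_le_sum fun j _ => (card_powersetCard j S).le)

/-- Up to the sign `(-1) ^ #X`, the coefficient of `∏ i ∈ X, y i` when `f` is written as a
multilinear polynomial in the indicator variables `y i = [i ∈ Y]`. -/
def subsetDiff (X : Finset α) : (Finset α → ℝ) →ₗ[ℝ] ℝ :=
  ∑ Z ∈ X.powerset, (-1 : ℝ) ^ #Z • LinearMap.proj Z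

lemma subsetDiff_apply (X : Finset α) (f : Finset α → ℝ) :
    subsetDiff X f = ∑ Z ∈ X.powerset, (-1 : ℝ) ^ #Z * f Z := by
  simp [subsetDiff]

variable [DecidableEq α]

def subsetIndicator (X Y : Finset α) : ℝ := if X ⊆ Y then 1 else 0

/-- The functions `Y ↦ P (1_Y)` with `P` a multilinear polynomial of degree at most `d` in the
variables indexed by `S`. -/
def lowDegree (S : Finset α) (d : ℕ) : Submodule ℝ (Finset α → ℝ) :=
  Submodule.span ℝ (Set.range fun X : lowSets S d => subsetIndicator (X : Finset α))

lemma subsetIndicator_mem_lowDegree {S X : Finset α} {d : ℕ} (hXS : X ⊆ S) (hX : #X ≤ d) :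
    subsetIndicator X ∈ lowDegree S d :=
  Submodule.subset_span ⟨⟨X, mem_lowSets.mpr ⟨hXS, hX⟩⟩, rfl⟩

lemma lowDegree_le_iff {S : Finset α} {d : ℕ} {W : Submodule ℝ (Finset α → ℝ)} :
    lowDegree S d ≤ W ↔ ∀ X ⊆ S, #X ≤ d → subsetIndicator X ∈ W := by
  rw [lowDegree, Submodule.span_le, Set.range_subset_iff, Subtype.forall]
  simp only [mem_lowSets, SetLike.mem_coe, and_imp]

lemma lowDegree_mono {S : Finset α} {d d' : ℕ} (h : d ≤ d') : lowDegree S d ≤ lowDegree S d' :=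
  lowDegree_le_iff.mpr fun _ hXS hX => subsetIndicator_mem_lowDegree hXS (hX.trans h)

lemma subsetIndicator_mul (X X' : Finset α) :
    subsetIndicator X * subsetIndicator X' = subsetIndicator (X ∪ X') := by
  ext Y
  simp only [Pi.mul_apply, subsetIndicator, union_subset_iff]
  split_ifs <;> simp_all

lemma lowDegree_mul_le (S : Finset α) (d d' : ℕ) :
    lowDegree S d * lowDegree S d' ≤ lowDegree S (d + d') := by
  rw [lowDegree, lowDegree, Submodule.span_mul_span, Submodule.span_le]
  rintro _ ⟨_, ⟨⟨X, hX⟩, rfl⟩, _, ⟨⟨X', hX'⟩, rfl⟩, rfl⟩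
  rw [mem_lowSets] at hX hX'
  change subsetIndicator X * subsetIndicator X' ∈ _
  rw [subsetIndicator_mul]
  exact subsetIndicator_mem_lowDegree (union_subset hX.1 hX'.1)
    ((card_union_le X X').trans (by omega))

lemma card_inter_sub_mem_lowDegree {S T : Finset α} (hTS : T ⊆ S) (c : ℝ) :
    (fun Y => (#(T ∩ Y) : ℝ) - c) ∈ lowDegree S 1 := by
  have h : (fun Y => (#(T ∩ Y) : ℝ) - c)
      = ∑ i ∈ T, subsetIndicator {i} - c • subsetIndicator ∅ := by
    ext Y
    simp [subsetIndicator, ← filter_mem_eq_inter]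
  rw [h]
  refine sub_mem (sum_mem fun i hi => ?_) (Submodule.smul_mem _ _ ?_)
  · exact subsetIndicator_mem_lowDegree (singleton_subset_iff.mpr (hTS hi)) (by simp)
  · exact subsetIndicator_mem_lowDegree (empty_subset S) (by simp)

lemma prod_mem_lowDegree {ι : Type*} {S : Finset α} (R : Finset ι) {f : ι → Finset α → ℝ}
    (hf : ∀ r ∈ R, f r ∈ lowDegree S 1) : ∏ r ∈ R, f r ∈ lowDegree S #R := by
  classical
  induction R using Finset.induction_on with
  | empty =>
    have : (1 : Finset α → ℝ) = subsetIndicator ∅ := by ext; simp [subsetIndicator]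
    simpa [this] using subsetIndicator_mem_lowDegree (empty_subset S) le_rfl
  | insert r R hr ih =>
    rw [prod_insert hr, card_insert_of_notMem hr, add_comm]
    exact lowDegree_mul_le S 1 #R <| Submodule.mul_mem_mul (hf r (mem_insert_self r R))
      (ih fun r' hr' => hf r' (mem_insert_of_mem hr'))

lemma finrank_lowDegree_le (S : Finset α) (d : ℕ) :
    Module.finrank ℝ (lowDegree S d) ≤ ∑ j ∈ range (d + 1), (#S).choose j :=
  calc Module.finrank ℝ (lowDegree S d) ≤ Fintype.card (lowSets S d) := finrank_range_le_card _
    _ = #(lowSets S d) := Fintype.card_coe _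
    _ ≤ _ := card_lowSets_le S d

lemma subsetDiff_eval_card_inter (q : ℝ[X]) (B X : Finset α) :
    subsetDiff X (fun Y => q.eval (#(B ∩ Y) : ℝ))
      = if X ⊆ B then (-1) ^ #X * (Δ_[1])^[#X] q.eval 0 else 0 := by
  rw [subsetDiff_apply]
  split_ifs with hXB
  · have hBZ : ∀ Z ∈ X.powerset, B ∩ Z = Z := fun Z hZ =>
      inter_eq_right.mpr ((mem_powerset.mp hZ).trans hXB)
    rw [sum_congr rfl fun Z hZ => by rw [hBZ Z hZ],
      sum_powerset_apply_card fun m => (-1 : ℝ) ^ m * q.eval (m : ℝ),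
      fwdDiff_iter_eq_sum_shift, mul_sum]
    refine sum_congr rfl fun k hk => ?_
    obtain ⟨m, hm⟩ := Nat.exists_eq_add_of_le (Nat.lt_succ_iff.mp (mem_range.mp hk))
    rw [hm, Nat.add_sub_cancel_left]
    have hsq : (-1 : ℝ) ^ m * (-1) ^ m = 1 := by rw [← mul_pow]; norm_num
    simp only [nsmul_eq_mul, zsmul_eq_mul, zero_add, mul_one]
    push_cast
    linear_combination -((-1 : ℝ) ^ k * ((k + m).choose k) * q.eval (k : ℝ)) * hsq
  · obtain ⟨x, hxX, hxB⟩ := not_subset.mp hXB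
    rw [← insert_erase hxX, sum_powerset_insert (notMem_erase x X), ← sum_add_distrib]
    refine sum_eq_zero fun Z hZ => ?_
    have hxZ : x ∉ Z := fun h => notMem_erase x X (mem_powerset.mp hZ h)
    rw [card_insert_of_notMem hxZ, inter_insert_of_notMem hxB, pow_succ]
    ring

lemma card_inter_lt_left {A B : Finset α} (hne : A ≠ B) (h : #B ≤ #A) : #(A ∩ B) < #A :=
  card_lt_card ⟨inter_subset_left, fun hA =>
    hne (eq_of_subset_of_card_le (fun _ hx => (mem_inter.mp (hA hx)).2) h)⟩

lemma card_inter_insert (A Y : Finset α) (e : α) :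
    #(A ∩ insert e Y) = #(A.erase e ∩ Y) + if e ∈ A then 1 else 0 := by
  split_ifs with heA
  · rw [← card_insert_of_notMem fun h => notMem_erase e A (mem_inter.mp h).1]
    congr 1
    ext x
    by_cases hx : x = e <;> simp [hx, heA]
  · rw [erase_eq_of_notMem heA, inter_insert_of_notMem heA, add_zero]

def interProd (A : Finset α) (R : Finset ℕ) (Y : Finset α) : ℝ :=
  ∏ l ∈ R, ((#(A ∩ Y) : ℝ) - l)

lemma interProd_eq_zero {A Y : Finset α} {R : Finset ℕ} (h : #(A ∩ Y) ∈ R) :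
    interProd A R Y = 0 :=
  prod_eq_zero h (sub_self _)

lemma interProd_self_ne_zero {A : Finset α} {R : Finset ℕ} (h : #A ∉ R) :
    interProd A R A ≠ 0 := by
  rw [interProd, inter_self]
  exact prod_ne_zero_iff.mpr fun l hl => sub_ne_zero.mpr <| by
    exact_mod_cast (show #A ≠ l from fun h' => h (h' ▸ hl))

lemma interProd_mem_lowDegree {S A : Finset α} (hAS : A ⊆ S) (R : Finset ℕ) :
    interProd A R ∈ lowDegree S #R := by
  have h : interProd A R = ∏ l ∈ R, fun Y => (#(A ∩ Y) : ℝ) - l := by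
    ext Y
    simp [interProd]
  rw [h]
  exact prod_mem_lowDegree R fun l _ => card_inter_sub_mem_lowDegree hAS l

lemma interProd_eq_eval (A : Finset α) (R : Finset ℕ) :
    interProd A R = fun Y => (∏ l ∈ R, (X - C (l : ℝ))).eval (#(A ∩ Y) : ℝ) := by
  ext Y
  simp [interProd, eval_prod]

lemma subsetDiff_interProd_of_card_lt {B X : Finset α} {R : Finset ℕ} (h : #R < #X) :
    subsetDiff X (interProd B R) = 0 := by
  rw [interProd_eq_eval, subsetDiff_eval_card_inter,
    fwdDiff_iter_eq_zero_of_degree_lt (by rwa [natDegree_finsetProd_X_sub_C_eq_card])]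
  simp

lemma subsetDiff_interProd_of_card_eq {B X : Finset α} {R : Finset ℕ} (h : #R = #X) :
    subsetDiff X (interProd B R) = (-1) ^ #X * (#X).factorial * subsetIndicator X B := by
  have hdeg : (∏ l ∈ R, (Polynomial.X - C (l : ℝ))).natDegree = #X := by
    rw [natDegree_finsetProd_X_sub_C_eq_card, h]
  rw [interProd_eq_eval, subsetDiff_eval_card_inter, ← hdeg,
    fwdDiff_iter_degree_eq_factorial, (monic_prod_X_sub_C _ R).leadingCoeff, hdeg]
  simp [subsetIndicator]

def IsLIntersecting (L : Finset ℕ) (𝒜 : Finset (Finset α)) : Prop :=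
  ∀ A ∈ 𝒜, ∀ B ∈ 𝒜, A ≠ B → #(A ∩ B) ∈ L

lemma IsLIntersecting.subset {L : Finset ℕ} {𝒜 ℬ : Finset (Finset α)} (h𝒜 : IsLIntersecting L 𝒜)
    (h : ℬ ⊆ 𝒜) : IsLIntersecting L ℬ :=
  fun A hA B hB hAB => h𝒜 A (h hA) B (h hB) hAB

/-- Evaluating at `insert e Y` makes the function blind to `e`, so that it lives on the subsets of
the remaining points: this is what turns `n` into `n - 1` in the bound. -/
def snevilyFun (L : Finset ℕ) (e : α) (A Y : Finset α) : ℝ :=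
  interProd A (if e ∈ A then L.filter (· < #A) else L.filter (· ≤ #A)) (insert e Y)

variable {L : Finset ℕ} {𝒜 : Finset (Finset α)} {e : α} {g : Finset α → ℝ}

lemma snevilyFun_of_notMem {A : Finset α} (heA : e ∉ A) :
    snevilyFun L e A = interProd A (L.filter (· ≤ #A)) := by
  ext Y
  simp [snevilyFun, heA, interProd, inter_insert_of_notMem heA]

lemma interProd_filter_le_eq_zero (h𝒜 : IsLIntersecting L 𝒜) {A B : Finset α} (hA : A ∈ 𝒜)
    (hB : B ∈ 𝒜) (hAB : A ≠ B) : interProd A (L.filter (· ≤ #A)) B = 0 :=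
  interProd_eq_zero (mem_filter.mpr ⟨h𝒜 A hA B hB hAB, card_le_card inter_subset_left⟩)

lemma coeff_eq_zero_of_card_notMem (h𝒜 : IsLIntersecting L 𝒜)
    (hg : ∑ A ∈ 𝒜, g A • interProd A (L.filter (· ≤ #A)) = 0)
    {T : Finset α} (hT : T ∈ 𝒜) (hTL : #T ∉ L) : g T = 0 := by
  have h := congrFun hg T
  simp only [Finset.sum_apply, Pi.smul_apply, smul_eq_mul, Pi.zero_apply] at h
  rw [sum_eq_single_of_mem T hT fun B hB hBT => by
    rw [interProd_filter_le_eq_zero h𝒜 hB hT hBT, mul_zero]] at h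
  exact (mul_eq_zero.mp h).resolve_right (interProd_self_ne_zero (by simp [hTL]))

lemma card_filter_le_le_self (hL : ∀ l ∈ L, 0 < l) (k : ℕ) : #(L.filter (· ≤ k)) ≤ k :=
  calc #(L.filter (· ≤ k)) ≤ #(Icc 1 k) := card_le_card fun l hl => by
          simp only [mem_filter] at hl
          exact mem_Icc.mpr ⟨hL l hl.1, hl.2⟩
    _ = k := by simp

lemma sum_filter_card_eq_mul_subsetIndicator_eq_zero
    (hg : ∑ A ∈ 𝒜, g A • interProd A (L.filter (· ≤ #A)) = 0)
    {k : ℕ} (hkL : k ∈ L) (hmax : ∀ B ∈ 𝒜, k < #B → g B = 0)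
    {X : Finset α} (hX : #X = #(L.filter (· ≤ k))) :
    ∑ B ∈ 𝒜.filter (#· = k), g B * subsetIndicator X B = 0 := by
  have hterm : ∀ B ∈ 𝒜, g B * subsetDiff X (interProd B (L.filter (· ≤ #B)))
      = (-1) ^ #X * (#X).factorial * (if #B = k then g B * subsetIndicator X B else 0) := by
    intro B hB
    rcases lt_trichotomy #B k with hlt | heq | hgt
    · have hdeg : #(L.filter (· ≤ #B)) < #X := hX ▸ card_lt_card
        ⟨monotone_filter_right L fun _ _ h => h.trans hlt.le, fun hsub => by
          have := (mem_filter.mp (hsub (mem_filter.mpr ⟨hkL, le_rfl⟩))).2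
          omega⟩
      rw [subsetDiff_interProd_of_card_lt hdeg, if_neg hlt.ne]
      simp
    · rw [subsetDiff_interProd_of_card_eq (by rw [heq, hX]), if_pos heq]
      ring
    · rw [hmax B hB hgt, if_neg hgt.ne']
      simp
  have h := congrArg (subsetDiff X) hg
  simp only [map_sum, map_smul, smul_eq_mul, map_zero] at h
  rw [sum_congr rfl hterm, ← mul_sum, ← sum_filter] at h
  exact (mul_eq_zero.mp h).resolve_left (by positivity)

variable [Fintype α]

lemma sum_subsetIndicator_insert (X B : Finset α) :
    ∑ y ∈ univ \ X, subsetIndicator (insert y X) B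
      = ((#B : ℝ) - #X) * subsetIndicator X B := by
  by_cases hXB : X ⊆ B
  · have h : ∀ y ∈ univ \ X, subsetIndicator (insert y X) B = if y ∈ B then 1 else 0 := by
      intro y _
      simp [subsetIndicator, insert_subset_iff, hXB]
    have hfilter : (univ \ X).filter (· ∈ B) = B \ X := by
      ext y
      simp [and_comm]
    rw [sum_congr rfl h, sum_boole, hfilter, card_sdiff_of_subset hXB,
      Nat.cast_sub (card_le_card hXB)]
    simp [subsetIndicator, hXB]
  · have h : ∀ y ∈ univ \ X, subsetIndicator (insert y X) B = 0 := fun y _ =>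
      if_neg fun h => hXB ((subset_insert y X).trans h)
    rw [sum_eq_zero h]
    simp [subsetIndicator, hXB]

lemma sum_mul_eq_zero_of_mem_lowDegree {Φ : Finset (Finset α)} {k D : ℕ}
    (hΦ : ∀ B ∈ Φ, #B = k) (hDk : D ≤ k) {g : Finset α → ℝ}
    (htop : ∀ X : Finset α, #X = D → ∑ B ∈ Φ, g B * subsetIndicator X B = 0)
    {S : Finset α} {f : Finset α → ℝ} (hf : f ∈ lowDegree S D) :
    ∑ B ∈ Φ, g B * f B = 0 := by
  have hdesc : ∀ j, ∀ X : Finset α, #X + j = D → ∑ B ∈ Φ, g B * subsetIndicator X B = 0 := by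
    intro j
    induction j with
    | zero => exact htop
    | succ j ih =>
      intro X hX
      have hsum : ∑ y ∈ univ \ X, ∑ B ∈ Φ, g B * subsetIndicator (insert y X) B = 0 :=
        sum_eq_zero fun y hy => ih _ (by rw [card_insert_of_notMem (mem_sdiff.mp hy).2]; omega)
      have hcount : ∀ B ∈ Φ, ∑ y ∈ univ \ X, g B * subsetIndicator (insert y X) B
          = ((k : ℝ) - #X) * (g B * subsetIndicator X B) := fun B hB => by
        rw [← mul_sum, sum_subsetIndicator_insert, hΦ B hB]
        ring
      rw [sum_comm, sum_congr rfl hcount, ← mul_sum] at hsum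
      refine (mul_eq_zero.mp hsum).resolve_left (sub_ne_zero.mpr ?_)
      exact_mod_cast (show k ≠ #X by omega)
  let ℓ : (Finset α → ℝ) →ₗ[ℝ] ℝ := ∑ B ∈ Φ, g B • LinearMap.proj B
  have hker : lowDegree S D ≤ LinearMap.ker ℓ := lowDegree_le_iff.mpr fun X _ hX => by
    simpa [ℓ] using hdesc (D - #X) X (by omega)
  simpa [ℓ] using hker hf

lemma coeff_eq_zero_of_card_mem (hL : ∀ l ∈ L, 0 < l) (h𝒜 : IsLIntersecting L 𝒜)
    (hg : ∑ A ∈ 𝒜, g A • interProd A (L.filter (· ≤ #A)) = 0)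
    {T : Finset α} (hT : T ∈ 𝒜) (hTL : #T ∈ L) (hmax : ∀ B ∈ 𝒜, #T < #B → g B = 0) :
    g T = 0 := by
  set k := #T
  have hQ : interProd T (L.filter (· < k)) ∈ lowDegree T #(L.filter (· ≤ k)) :=
    lowDegree_mono (card_le_card (monotone_filter_right L fun _ _ h => le_of_lt h))
      (interProd_mem_lowDegree subset_rfl _)
  have h := sum_mul_eq_zero_of_mem_lowDegree (fun B hB => (mem_filter.mp hB).2)
    (card_filter_le_le_self hL k)
    (fun X hX => sum_filter_card_eq_mul_subsetIndicator_eq_zero hg hTL hmax hX) hQ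
  have hTk : T ∈ 𝒜.filter (#· = k) := mem_filter.mpr ⟨hT, rfl⟩
  rw [sum_eq_single_of_mem T hTk fun B hB hBT => by
    obtain ⟨hB, hBk⟩ := mem_filter.mp hB
    rw [interProd_eq_zero (R := L.filter (· < k)) (mem_filter.mpr ⟨h𝒜 T hT B hB hBT.symm,
      card_inter_lt_left hBT.symm hBk.le⟩), mul_zero]] at h
  exact (mul_eq_zero.mp h).resolve_right (interProd_self_ne_zero (by simp [k]))

theorem linearIndepOn_interProd (hL : ∀ l ∈ L, 0 < l) (h𝒜 : IsLIntersecting L 𝒜) :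
    LinearIndepOn ℝ (fun A => interProd A (L.filter (· ≤ #A))) (𝒜 : Set (Finset α)) := by
  rw [linearIndepOn_finset_iff]
  intro g hg
  by_contra! hne
  obtain ⟨T, hT, hTmax⟩ := exists_max_image (𝒜.filter (g · ≠ 0)) card
    (let ⟨A, hA, hgA⟩ := hne; ⟨A, mem_filter.mpr ⟨hA, hgA⟩⟩)
  obtain ⟨hT, hgT⟩ := mem_filter.mp hT
  have hmax : ∀ B ∈ 𝒜, #T < #B → g B = 0 := fun B hB hlt => by
    by_contra hgB
    exact (hTmax B (mem_filter.mpr ⟨hB, hgB⟩)).not_gt hlt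
  by_cases hTL : #T ∈ L
  · exact hgT (coeff_eq_zero_of_card_mem hL h𝒜 hg hT hTL hmax)
  · exact hgT (coeff_eq_zero_of_card_notMem h𝒜 hg hT hTL)

lemma snevilyFun_mem_lowDegree (A : Finset α) :
    snevilyFun L e A ∈ lowDegree (univ.erase e) #L := by
  set R := if e ∈ A then L.filter (· < #A) else L.filter (· ≤ #A)
  have hR : #R ≤ #L := by
    simp only [R]
    split_ifs <;> exact card_filter_le _ _
  have h : snevilyFun L e A
      = ∏ l ∈ R, fun Y => (#(A.erase e ∩ Y) : ℝ) - (l - if e ∈ A then 1 else 0) := by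
    ext Y
    simp only [snevilyFun, interProd, Finset.prod_apply, card_inter_insert]
    push_cast
    exact prod_congr rfl fun _ _ => by ring
  rw [h]
  exact lowDegree_mono hR <| prod_mem_lowDegree R fun l _ =>
    card_inter_sub_mem_lowDegree (erase_subset_erase e (subset_univ A)) _

lemma coeff_eq_zero_of_mem (h𝒜 : IsLIntersecting L 𝒜)
    (hg : ∑ A ∈ 𝒜, g A • snevilyFun L e A = 0) : ∀ C ∈ 𝒜, e ∈ C → g C = 0 := by
  by_contra! hne
  obtain ⟨C, hC, hCmin⟩ := exists_min_image (𝒜.filter fun C => e ∈ C ∧ g C ≠ 0) card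
    (let ⟨C, hC, heC, hgC⟩ := hne; ⟨C, mem_filter.mpr ⟨hC, heC, hgC⟩⟩)
  obtain ⟨hC, heC, hgC⟩ := mem_filter.mp hC
  have hvanish : ∀ A ∈ 𝒜, A ≠ C → g A * snevilyFun L e A C = 0 := by
    intro A hA hAC
    by_cases heA : e ∈ A
    · by_cases hgA : g A = 0
      · rw [hgA, zero_mul]
      have hCA : #C ≤ #A := hCmin A (mem_filter.mpr ⟨hA, heA, hgA⟩)
      rw [snevilyFun, if_pos heA, insert_eq_of_mem heC,
        interProd_eq_zero (R := L.filter (· < #A))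
          (mem_filter.mpr ⟨h𝒜 A hA C hC hAC, card_inter_lt_left hAC hCA⟩),
        mul_zero]
    · rw [snevilyFun_of_notMem heA, interProd_filter_le_eq_zero h𝒜 hA hC hAC, mul_zero]
  have h := congrFun hg C
  simp only [Finset.sum_apply, Pi.smul_apply, smul_eq_mul, Pi.zero_apply] at h
  rw [sum_eq_single_of_mem C hC hvanish, snevilyFun, if_pos heC, insert_eq_of_mem heC] at h
  exact hgC ((mul_eq_zero.mp h).resolve_right (interProd_self_ne_zero (by simp)))

theorem linearIndepOn_snevilyFun (hL : ∀ l ∈ L, 0 < l) (h𝒜 : IsLIntersecting L 𝒜) :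
    LinearIndepOn ℝ (snevilyFun L e) (𝒜 : Set (Finset α)) := by
  rw [linearIndepOn_finset_iff]
  intro g hg A hA
  have hmem := coeff_eq_zero_of_mem h𝒜 hg
  have hnotMem : ∑ A ∈ 𝒜.filter (e ∉ ·), g A • interProd A (L.filter (· ≤ #A)) = 0 := by
    rw [← hg, sum_filter]
    refine sum_congr rfl fun A hA => ?_
    split_ifs with heA
    · rw [hmem A hA heA, zero_smul]
    · rw [snevilyFun_of_notMem heA]
  by_cases heA : e ∈ A
  · exact hmem A hA heA
  · exact linearIndepOn_finset_iff.mp (linearIndepOn_interProd hL (h𝒜.subset (filter_subset _ _)))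
      g hnotMem A (mem_filter.mpr ⟨hA, heA⟩)

theorem card_le_sum_choose (hL : ∀ l ∈ L, 0 < l) (h𝒜 : IsLIntersecting L 𝒜) (e : α) :
    #𝒜 ≤ ∑ j ∈ range (#L + 1), (Fintype.card α - 1).choose j := by
  have hli : LinearIndependent ℝ fun A : 𝒜 => snevilyFun L e A :=
    linearIndepOn_snevilyFun (e := e) hL h𝒜
  have hspan : Submodule.span ℝ (Set.range fun A : 𝒜 => snevilyFun L e A)
      ≤ lowDegree (univ.erase e) #L :=
    Submodule.span_le.mpr <| Set.range_subset_iff.mpr fun A =>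
      snevilyFun_mem_lowDegree (L := L) (e := e) A
  calc #𝒜 = Module.finrank ℝ (Submodule.span ℝ (Set.range fun A : 𝒜 => snevilyFun L e A)) := by
        rw [finrank_span_eq_card hli, Fintype.card_coe]
    _ ≤ Module.finrank ℝ (lowDegree (univ.erase e) #L) := Submodule.finrank_mono hspan
    _ ≤ ∑ j ∈ range (#L + 1), (#(univ.erase e)).choose j := finrank_lowDegree_le _ _
    _ = ∑ j ∈ range (#L + 1), (Fintype.card α - 1).choose j := by
        rw [card_erase_of_mem (mem_univ e), card_univ]

end Snevily

/-- **Theorem 1.5 (Snevily).** Let `ℒ` be a set of `s` positive integers. If `𝒜` is an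
`ℒ`-intersecting family of (pairwise distinct) subsets of `[n]`, then
`|𝒜| ≤ C(n-1, s) + C(n-1, s-1) + ⋯ + C(n-1, 0)`. -/
theorem stmt_17 (n s : ℕ) (L : Finset ℕ) (hL : L.card = s) (hLpos : ∀ x ∈ L, 0 < x)
    (A : Finset (Finset (Fin n)))
    (hAL : ∀ a ∈ A, ∀ b ∈ A, a ≠ b → (a ∩ b).card ∈ L) :
    A.card ≤ ∑ j ∈ Finset.range (s + 1), (n - 1).choose j := by
  subst hL
  cases n with
  | zero =>
    calc A.card ≤ Fintype.card (Finset (Fin 0)) := card_le_univ A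
      _ = (0 - 1).choose 0 := by simp
      _ ≤ _ :=
        single_le_sum (fun j _ => Nat.zero_le _) (mem_range.mpr (Nat.succ_pos _))
  | succ m => simpa using Snevily.card_le_sum_choose hLpos hAL 0
end
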